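/- arXiv:1405.7647 — 8 statements merged into one kernel-verified Lean document; each statement's English description precedes it below -/
import Mathlib

section
/- Let S ⊆ ℤ^n be a finite nonempty set, let P = conv(S), and let d be the dimension of the affine hull of P. If p is a polynomial with rational coefficients such that p(k) = #(ℤ^n ∩ k·P) for all positive integers k, then p has degree exactly d. -/
/-!
Write `W` for the direction of the affine span of `P`, so `d = dim W`.

Upper bound: two lattice points of `k • P` differ by a vector of `W`, and a vector of `W` is
determined by at most `d` of its coordinates. Projecting onto these coordinates therefore injects
the lattice points of `k • P` into a box with `O(k)` points per side, so there are `O(k ^ d)`.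

Lower bound: fix `v ∈ S` and `w₁, …, w_d` with `v + wⱼ ∈ S` and the `wⱼ` linearly independent.
The lattice points `k • v + ∑ mⱼ • wⱼ` with `0 ≤ mⱼ ≤ k / d` lie in `k • P` by convexity and are
pairwise distinct, so there are at least `(k / d + 1) ^ d ≥ k ^ d / d ^ d` of them.

A polynomial squeezed between two positive multiples of `k ^ d` has degree `d`.
-/

open Polynomial Filter Module Finset
open scoped Pointwise

namespace Polynomial

variable {𝕜 : Type*} [NormedField 𝕜] [LinearOrder 𝕜] [IsStrictOrderedRing 𝕜] [OrderTopology 𝕜]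
  [Archimedean 𝕜] {p : 𝕜[X]} {d : ℕ}

theorem natDegree_le_of_abs_eval_natCast_le {C : 𝕜}
    (h : ∀ᶠ k : ℕ in atTop, |p.eval (k : 𝕜)| ≤ C * (k : 𝕜) ^ d) : p.natDegree ≤ d := by
  by_contra! hd
  have hdeg : (X ^ d : 𝕜[X]).degree < p.degree := by
    rw [degree_X_pow, degree_eq_natDegree (ne_zero_of_natDegree_gt hd)]
    exact_mod_cast hd
  have hratio := ((abs_div_tendsto_atTop_atTop_of_degree_gt p (X ^ d) hdeg
    (pow_ne_zero d X_ne_zero)).comp tendsto_natCast_atTop_atTop).eventually_gt_atTop C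
  obtain ⟨k, hk, hgt, hpos⟩ := (h.and (hratio.and (eventually_gt_atTop 0))).exists
  simp only [Function.comp_apply, eval_pow, eval_X, abs_div, abs_pow, Nat.abs_cast] at hgt
  rw [lt_div_iff₀ (by positivity)] at hgt
  exact hgt.not_ge hk

theorem le_natDegree_of_le_abs_eval_natCast {c : 𝕜} (hc : 0 < c)
    (h : ∀ᶠ k : ℕ in atTop, c * (k : 𝕜) ^ d ≤ |p.eval (k : 𝕜)|) : d ≤ p.natDegree := by
  by_contra! hd
  have hdeg : p.degree < (X ^ d : 𝕜[X]).degree := by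
    rw [degree_X_pow]
    exact p.degree_le_natDegree.trans_lt (by exact_mod_cast hd)
  have hratio := (((div_tendsto_atTop_zero_of_degree_lt p (X ^ d) hdeg).abs.comp
    tendsto_natCast_atTop_atTop).eventually (gt_mem_nhds (by simpa using hc)))
  obtain ⟨k, hk, hlt, hpos⟩ := (h.and (hratio.and (eventually_gt_atTop 0))).exists
  simp only [Function.comp_apply, eval_pow, eval_X, abs_div, abs_pow, Nat.abs_cast] at hlt
  rw [div_lt_iff₀ (by positivity)] at hlt
  exact hlt.not_ge hk

end Polynomial

theorem Submodule.exists_card_le_finrank_eq_zero_of_forall_apply_eq_zero {K ι : Type*} [Field K]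
    (W : Submodule K (ι → K)) [FiniteDimensional K W] :
    ∃ T : Finset ι, #T ≤ finrank K W ∧ ∀ w ∈ W, (∀ i ∈ T, w i = 0) → w = 0 := by
  classical
  -- A linearly independent subfamily of the coordinate functionals spanning the same subspace of
  -- the dual has at most `finrank K W` members and still separates the points of `W`.
  let coord : ι → Dual K W := fun i => (LinearMap.proj i).comp W.subtype
  obtain ⟨κ, a, -, hspan, hli⟩ := exists_linearIndependent' K coord
  have : Fintype κ := @Fintype.ofFinite _ hli.finite
  refine ⟨univ.image a, card_image_le.trans ?_, fun w hw hT => ?_⟩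
  · simpa using hli.fintype_card_le_finrank
  have hker : span K (Set.range coord) ≤ LinearMap.ker (Dual.eval K W ⟨w, hw⟩) := by
    rw [← hspan, span_le]
    rintro _ ⟨j, rfl⟩
    exact hT (a j) (mem_image_of_mem a (mem_univ j))
  funext i
  exact hker (subset_span ⟨i, rfl⟩)

theorem Convex.add_sum_smul_mem {𝕜 E β : Type*} [Field 𝕜] [LinearOrder 𝕜] [IsStrictOrderedRing 𝕜]
    [AddCommGroup E] [Module 𝕜 E] [Fintype β] {K : Set E} (hK : Convex 𝕜 K) {v : E}
    {w : β → E} {t : β → 𝕜} (hv : v ∈ K) (hw : ∀ j, v + w j ∈ K) (ht₀ : ∀ j, 0 ≤ t j)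
    (ht₁ : ∑ j, t j ≤ 1) : v + ∑ j, t j • w j ∈ K := by
  have hcomb : v + ∑ j, t j • w j = (1 - ∑ j, t j) • v + ∑ j, t j • (v + w j) := by
    simp only [smul_add, sum_add_distrib, ← sum_smul, sub_smul, one_smul]
    abel
  rw [hcomb]
  convert hK.sum_mem (t := univ) (w := fun o => Option.elim o (1 - ∑ j, t j) t)
    (z := fun o => Option.elim o v (v + w ·)) (fun o _ => ?_) ?_ (fun o _ => ?_) using 1
  · simp [Fintype.sum_option]
  · cases o <;> simp [ht₀, ht₁]
  · simp [Fintype.sum_option]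
  · cases o <;> simp [hv, hw]

theorem exists_linearIndependent_add_mem {K G E : Type*} [Field K] [AddCommGroup G]
    [AddCommGroup E] [Module K E] [FiniteDimensional K E] (f : G →+ E) {S : Set G} {v : G}
    (hv : v ∈ S) :
    ∃ w : Fin (finrank K (vectorSpan K (f '' S))) → G,
      (∀ j, v + w j ∈ S) ∧ LinearIndependent K (f ∘ w) := by
  let u : S → E := fun x => f x - f v
  obtain ⟨κ, a, -, hspan, hli⟩ := exists_linearIndependent' K u
  have : Fintype κ := @Fintype.ofFinite _ hli.finite
  have hrange : Set.range u = (· -ᵥ f v) '' (f '' S) := by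
    ext; simp [u, vsub_eq_sub]
  have hcard : Fintype.card κ = finrank K (vectorSpan K (f '' S)) := by
    rw [← finrank_span_eq_card hli, hspan, hrange,
      vectorSpan_eq_span_vsub_set_right K (Set.mem_image_of_mem f hv)]
  let e := (Fintype.equivFinOfCardEq hcard).symm
  refine ⟨fun j => (a (e j) : G) - v, fun j => by simp, ?_⟩
  convert hli.comp e e.injective using 1
  ext j
  simp [u]

def Pi.intCastAddHom (ι : Type*) : (ι → ℤ) →+ (ι → ℝ) := (Int.castAddHom ℝ).compLeft ι

def integerPoints {ι : Type*} (A : Set (ι → ℝ)) : Set (ι → ℤ) := Pi.intCastAddHom ι ⁻¹' A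

section IntegerPoints

variable {ι : Type*}

@[simp]
theorem Pi.intCastAddHom_apply (x : ι → ℤ) (i : ι) : Pi.intCastAddHom ι x i = x i := rfl

theorem ncard_le_of_abs_le_of_sub_mem [Fintype ι] {A : Set (ι → ℤ)} {B : ℕ}
    (hB : ∀ x ∈ A, ∀ i, |x i| ≤ B) {W : Submodule ℝ (ι → ℝ)}
    (hW : ∀ x ∈ A, ∀ y ∈ A, Pi.intCastAddHom ι (x - y) ∈ W) :
    A.ncard ≤ (2 * B + 1) ^ finrank ℝ W := by
  classical
  obtain ⟨T, hT, hzero⟩ := W.exists_card_le_finrank_eq_zero_of_forall_apply_eq_zero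
  let box : Finset (T → ℤ) := Fintype.piFinset fun _ => Icc (-B : ℤ) B
  calc A.ncard ≤ (box : Set (T → ℤ)).ncard := by
        refine Set.ncard_le_ncard_of_injOn T.restrict (fun x hx => ?_) (fun x hx y hy hxy => ?_)
          box.finite_toSet
        · simp only [box, mem_coe, Fintype.mem_piFinset, mem_Icc]
          exact fun i => abs_le.mp (hB x hx i)
        · have := hzero _ (hW x hx y hy) fun i hi => by
            simpa [sub_eq_zero] using congrFun hxy ⟨i, hi⟩
          funext i
          simpa [sub_eq_zero] using congrFun this i
    _ = (2 * B + 1) ^ #T := by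
        rw [Set.ncard_coe_finset, Fintype.card_piFinset, prod_const, Int.card_Icc, card_univ,
          Fintype.card_coe]
        congr 1
        omega
    _ ≤ (2 * B + 1) ^ finrank ℝ W := Nat.pow_le_pow_right (by omega) hT

theorem finite_of_abs_le [Finite ι] {A : Set (ι → ℤ)} {B : ℕ} (hB : ∀ x ∈ A, ∀ i, |x i| ≤ B) :
    A.Finite :=
  (Set.Finite.pi fun _ => Set.finite_Icc (-B : ℤ) B).subset fun x hx i _ => abs_le.mp (hB x hx i)

variable {P : Set (ι → ℝ)} {k : ℕ}

theorem abs_le_of_mem_integerPoints_smul {R : ℕ} (hR : ∀ y ∈ P, ∀ i, |y i| ≤ R) {x : ι → ℤ}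
    (hx : x ∈ integerPoints ((k : ℝ) • P)) (i : ι) : |x i| ≤ (k * R : ℕ) := by
  obtain ⟨y, hy, hxy⟩ := hx
  have hxi : (x i : ℝ) = k * y i := by simpa using (congrFun hxy i).symm
  have : |(x i : ℝ)| ≤ (k * R : ℕ) := by
    rw [hxi, abs_mul, Nat.abs_cast]
    push_cast
    exact mul_le_mul_of_nonneg_left (hR y hy i) k.cast_nonneg
  exact_mod_cast this

theorem intCastAddHom_sub_mem_direction {c : ℝ} {x y : ι → ℤ} (hx : x ∈ integerPoints (c • P))
    (hy : y ∈ integerPoints (c • P)) :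
    Pi.intCastAddHom ι (x - y) ∈ (affineSpan ℝ P).direction := by
  obtain ⟨p, hp, hpx⟩ := hx
  obtain ⟨q, hq, hqy⟩ := hy
  rw [map_sub, ← hpx, ← hqy, ← smul_sub]
  exact Submodule.smul_mem _ c
    (AffineSubspace.vsub_mem_direction (mem_affineSpan ℝ hp) (mem_affineSpan ℝ hq))

theorem ncard_integerPoints_smul_le [Fintype ι] {R : ℕ} (hR : ∀ y ∈ P, ∀ i, |y i| ≤ R)
    (hk : 0 < k) :
    (integerPoints ((k : ℝ) • P)).ncard ≤
      ((2 * R + 1) * k) ^ finrank ℝ (affineSpan ℝ P).direction :=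
  (ncard_le_of_abs_le_of_sub_mem (fun _ hx => abs_le_of_mem_integerPoints_smul hR hx)
    fun _ hx _ hy => intCastAddHom_sub_mem_direction hx hy).trans
    (Nat.pow_le_pow_left (by nlinarith) _)

theorem pow_div_add_one_le_ncard_integerPoints_smul (hP : Convex ℝ P) (hk : 0 < k)
    (hfin : (integerPoints ((k : ℝ) • P)).Finite) {d : ℕ} {v : ι → ℤ} {w : Fin d → ι → ℤ}
    (hv : v ∈ integerPoints P) (hw : ∀ j, v + w j ∈ integerPoints P)
    (hli : LinearIndependent ℝ (Pi.intCastAddHom ι ∘ w)) :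
    (k / d + 1) ^ d ≤ (integerPoints ((k : ℝ) • P)).ncard := by
  let g : (Fin d → ℕ) → ι → ℤ := fun m => k • v + ∑ j, m j • w j
  let box : Finset (Fin d → ℕ) := Fintype.piFinset fun _ => range (k / d + 1)
  have hsum (m) (hm : m ∈ box) : ∑ j, m j ≤ k :=
    calc ∑ j, m j ≤ ∑ _j : Fin d, k / d :=
          sum_le_sum fun j _ => Nat.lt_succ_iff.mp (mem_range.mp (Fintype.mem_piFinset.mp hm j))
      _ ≤ k := by simpa [mul_comm] using Nat.div_mul_le_self k d
  have hmem (m) (hm : m ∈ box) : g m ∈ integerPoints ((k : ℝ) • P) := by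
    have hkR : (k : ℝ) ≠ 0 := by positivity
    have hg : Pi.intCastAddHom ι (g m) =
        (k : ℝ) • (Pi.intCastAddHom ι v + ∑ j, ((m j : ℝ) / k) • Pi.intCastAddHom ι (w j)) := by
      simp only [g, map_add, map_nsmul, map_sum, smul_add, smul_sum, smul_smul,
        ← Nat.cast_smul_eq_nsmul ℝ, mul_div_cancel₀ _ hkR]
    rw [integerPoints, Set.mem_preimage, hg]
    have hw' (j) : Pi.intCastAddHom ι v + Pi.intCastAddHom ι (w j) ∈ P := by
      simpa only [integerPoints, Set.mem_preimage, map_add] using hw j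
    refine Set.smul_mem_smul_set (hP.add_sum_smul_mem hv hw' (fun j => by positivity) ?_)
    rw [← sum_div, div_le_one (by positivity)]
    exact_mod_cast hsum m hm
  have hinj : Set.InjOn g box := fun m _ m' _ h => by
    have := congrArg (Pi.intCastAddHom ι) (add_left_cancel h)
    simp only [map_sum, map_nsmul, ← Nat.cast_smul_eq_nsmul ℝ] at this
    funext j
    exact_mod_cast Fintype.linearIndependent_iffₛ.mp hli _ _ this j
  calc (k / d + 1) ^ d = (box : Set (Fin d → ℕ)).ncard := by
        rw [Set.ncard_coe_finset, Fintype.card_piFinset]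
        simp
    _ ≤ _ := Set.ncard_le_ncard_of_injOn g hmem hinj hfin

end IntegerPoints

theorem Nat.pow_le_pow_mul_div_add_one (k d : ℕ) : k ^ d ≤ d ^ d * (k / d + 1) ^ d := by
  rcases d.eq_zero_or_pos with rfl | hd
  · simp
  rw [← mul_pow]
  exact Nat.pow_le_pow_left (Nat.lt_mul_div_succ k hd).le d

/-- The Ehrhart polynomial of an integral polytope has degree equal to the dimension of the
affine hull of the polytope. -/
theorem ehrhart_polynomial_degree_eq_dim
    (n : ℕ) (S : Finset (Fin n → ℤ)) (hS : S.Nonempty)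
    (P : Set (Fin n → ℝ))
    (hP : P = convexHull ℝ ((fun y : Fin n → ℤ => fun i => (y i : ℝ)) '' ↑S))
    (d : ℕ) (hd : d = Module.finrank ℝ (affineSpan ℝ P).direction)
    (p : Polynomial ℚ)
    (hp : ∀ k : ℕ, 0 < k →
      p.eval (k : ℚ) =
        (Set.ncard {x : Fin n → ℤ | (fun i => (x i : ℝ)) ∈ (k : ℝ) • P} : ℚ)) :
    p.natDegree = d := by
  obtain ⟨v, hvS⟩ := hS
  replace hP : P = convexHull ℝ (Pi.intCastAddHom (Fin n) '' S) := hP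
  have hsub : Pi.intCastAddHom (Fin n) '' S ⊆ P := hP ▸ subset_convexHull ℝ _
  obtain ⟨R, hR⟩ : ∃ R : ℕ, ∀ y ∈ P, ∀ i, |y i| ≤ R := by
    have hcompact : IsCompact P := hP ▸ (S.finite_toSet.image _).isCompact_convexHull (𝕜 := ℝ)
    obtain ⟨R, hR⟩ := isBounded_iff_forall_norm_le.mp hcompact.isBounded
    exact ⟨⌈R⌉₊, fun y hy i => (norm_le_pi_norm y i).trans ((hR y hy).trans (Nat.le_ceil R))⟩
  obtain ⟨w, hwS, hli⟩ : ∃ w : Fin d → Fin n → ℤ,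
      (∀ j, v + w j ∈ S) ∧ LinearIndependent ℝ (Pi.intCastAddHom (Fin n) ∘ w) := by
    rw [hd, hP, affineSpan_convexHull, direction_affineSpan]
    exact exists_linearIndependent_add_mem _ hvS
  have hlower (k : ℕ) (hk : 0 < k) : k ^ d ≤ d ^ d * (integerPoints ((k : ℝ) • P)).ncard :=
    (Nat.pow_le_pow_mul_div_add_one k d).trans <| Nat.mul_le_mul_left _ <|
      pow_div_add_one_le_ncard_integerPoints_smul (hP ▸ convex_convexHull ℝ _) hk
        (finite_of_abs_le fun _ hx => abs_le_of_mem_integerPoints_smul hR hx)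
        (hsub ⟨v, hvS, rfl⟩) (fun j => hsub ⟨_, hwS j, rfl⟩) hli
  have hupper (k : ℕ) (hk : 0 < k) :
      (integerPoints ((k : ℝ) • P)).ncard ≤ (2 * R + 1) ^ d * k ^ d := by
    rw [← mul_pow, hd]
    exact ncard_integerPoints_smul_le hR hk
  have heval : ∀ᶠ k : ℕ in atTop,
      0 < k ∧ |p.eval (k : ℚ)| = (integerPoints ((k : ℝ) • P)).ncard := by
    filter_upwards [eventually_gt_atTop 0] with k hk
    exact ⟨hk, by rw [hp k hk, abs_of_nonneg (Nat.cast_nonneg _)]; rfl⟩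
  refine le_antisymm (natDegree_le_of_abs_eval_natCast_le (C := ((2 * R + 1) ^ d : ℕ)) ?_)
    (le_natDegree_of_le_abs_eval_natCast (c := ((d ^ d : ℕ) : ℚ)⁻¹)
      (inv_pos.mpr (by exact_mod_cast Nat.pow_self_pos)) ?_)
  · filter_upwards [heval] with k ⟨hk, hcount⟩
    rw [hcount]
    exact_mod_cast hupper k hk
  · filter_upwards [heval] with k ⟨hk, hcount⟩
    rw [hcount, inv_mul_le_iff₀ (by exact_mod_cast Nat.pow_self_pos)]
    exact_mod_cast hlower k hk
end

section
/- Let S ⊆ ℤ^n be a finite set whose convex hull P = conv(S) is full-dimensional (its affine hull is all of ℝ^n). If p is a polynomial with rational coefficients such that p(k) = #(ℤ^n ∩ k·P) for all positive integers k, then the coefficient of the degree-n term of p equals the Lebesgue volume of P. -/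
/-!
Counting the lattice points of `k • P` is counting the points of the finer lattice `k⁻¹ • ℤⁿ`
in `P`, i.e. evaluating a Riemann sum of the indicator of `P`. A convex body has a Lebesgue-null
frontier, so these counts divided by `kⁿ` tend to the volume of `P`. On the other side,
`p(k) / kⁿ` tends to the coefficient of degree `n` of `p` (and diverges if `deg p > n`).
-/

open Filter Topology MeasureTheory Set Bornology
open scoped Pointwise

namespace Polynomial

theorem coeff_eq_of_tendsto_eval_natCast_div_pow {q : ℝ[X]} {n : ℕ} {V : ℝ}
    (h : Tendsto (fun k : ℕ => q.eval (k : ℝ) / (k : ℝ) ^ n) atTop (𝓝 V)) :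
    q.coeff n = V := by
  have hXn : (X ^ n : ℝ[X]).degree = n := degree_X_pow n
  have along_nat {g : ℝ → ℝ} {l : Filter ℝ}
      (hg : Tendsto (fun x => g (q.eval x / (X ^ n : ℝ[X]).eval x)) atTop l) :
      Tendsto (fun k : ℕ => g (q.eval (k : ℝ) / (k : ℝ) ^ n)) atTop l := by
    simpa [Function.comp_def] using hg.comp tendsto_natCast_atTop_atTop
  rcases lt_trichotomy q.degree n with hlt | heq | hgt
  · rw [coeff_eq_zero_of_degree_lt hlt]
    exact tendsto_nhds_unique
      (along_nat (g := id) (div_tendsto_atTop_zero_of_degree_lt q _ (hXn ▸ hlt))) h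
  · have hlim := along_nat (g := id)
      (div_tendsto_atTop_leadingCoeff_div_of_degree_eq q _ (heq.trans hXn.symm))
    rw [leadingCoeff_X_pow, div_one, leadingCoeff, natDegree_eq_of_degree_eq_some heq] at hlim
    exact tendsto_nhds_unique hlim h
  · exact absurd (along_nat (abs_div_tendsto_atTop_atTop_of_degree_gt q _ (hXn ▸ hgt)
      (pow_ne_zero n X_ne_zero))) (not_tendsto_atTop_of_tendsto_nhds h.abs)

end Polynomial

section LatticePoints

variable {ι : Type*} [Fintype ι]

theorem ncard_intPoints_smul_eq_natCard (s : Set (ι → ℝ)) (k : ℕ) [NeZero k] :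
    {x : ι → ℤ | (fun i => (x i : ℝ)) ∈ (k : ℝ) • s}.ncard =
      Nat.card ↑(s ∩ (k : ℝ)⁻¹ • (Submodule.span ℤ (range (Pi.basisFun ℝ ι)) : Set (ι → ℝ))) := by
  have hk : (k : ℝ) ≠ 0 := NeZero.ne _
  have hinj : Function.Injective fun x : ι → ℤ => (k : ℝ)⁻¹ • fun i => (x i : ℝ) := by
    intro x y hxy
    funext i
    simpa [hk] using congrFun hxy i
  rw [Nat.card_coe_set_eq, ← ncard_image_of_injective _ hinj, ← Submodule.coe_pointwise_smul]
  congr 1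
  ext v
  simp only [mem_inter_iff, SetLike.mem_coe, BoxIntegral.unitPartition.mem_smul_span_iff,
    mem_image, mem_ofPred_eq, eq_intCast, mem_range]
  constructor
  · rintro ⟨x, hx, rfl⟩
    refine ⟨(mem_smul_set_iff_inv_smul_mem₀ hk _ _).mp hx, fun i => ⟨x i, ?_⟩⟩
    simp [hk]
  · rintro ⟨hv, hint⟩
    choose x hx using hint
    have hxv : (fun i => (x i : ℝ)) = (k : ℝ) • v := funext hx
    exact ⟨x, hxv ▸ smul_mem_smul_set hv, by rw [hxv, inv_smul_smul₀ hk]⟩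

theorem tendsto_ncard_intPoints_smul_div_pow {s : Set (ι → ℝ)} (hb : IsBounded s)
    (hm : MeasurableSet s) (hf : volume (frontier s) = 0) :
    Tendsto (fun k : ℕ => ({x : ι → ℤ | (fun i => (x i : ℝ)) ∈ (k : ℝ) • s}.ncard : ℝ) /
      (k : ℝ) ^ Fintype.card ι) atTop (𝓝 (volume.real s)) := by
  refine (tendsto_card_div_pow_atTop_volume s hb hm hf).congr' ?_
  filter_upwards [eventually_ne_atTop 0] with k hk
  have : NeZero k := ⟨hk⟩
  rw [ncard_intPoints_smul_eq_natCard]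

end LatticePoints

theorem ehrhart_polynomial_leading_coeff_eq_volume_general
    (n : ℕ) (S : Finset (Fin n → ℤ))
    (P : Set (Fin n → ℝ))
    (hP : P = convexHull ℝ ((fun y : Fin n → ℤ => fun i => (y i : ℝ)) '' ↑S))
    (p : Polynomial ℚ)
    (hp : ∀ k : ℕ, 0 < k →
      p.eval (k : ℚ) =
        (Set.ncard {x : Fin n → ℤ | (fun i => (x i : ℝ)) ∈ (k : ℝ) • P} : ℚ)) :
    ((p.coeff n : ℚ) : ℝ) = (MeasureTheory.volume P).toReal := by
  have hPc : IsCompact P := hP ▸ (S.finite_toSet.image _).isCompact_convexHull ℝ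
  have hPconv : Convex ℝ P := hP ▸ convex_convexHull ℝ _
  have hcount := tendsto_ncard_intPoints_smul_div_pow hPc.isBounded hPc.isClosed.measurableSet
    (hPconv.addHaar_frontier volume)
  rw [Fintype.card_fin] at hcount
  rw [show ((p.coeff n : ℚ) : ℝ) = (p.map (algebraMap ℚ ℝ)).coeff n by simp, ← measureReal_def]
  refine Polynomial.coeff_eq_of_tendsto_eval_natCast_div_pow (hcount.congr' ?_)
  filter_upwards [eventually_gt_atTop 0] with k hk
  simp [Polynomial.eval_map, Polynomial.eval₂_at_natCast, hp k hk]

/-- The leading coefficient (the coefficient of degree `n`) of the Ehrhart polynomial of a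
full-dimensional integral polytope in `ℝ^n` equals its Lebesgue volume. -/
theorem ehrhart_polynomial_leading_coeff_eq_volume
    (n : ℕ) (S : Finset (Fin n → ℤ))
    (P : Set (Fin n → ℝ))
    (hP : P = convexHull ℝ ((fun y : Fin n → ℤ => fun i => (y i : ℝ)) '' ↑S))
    (hfull : affineSpan ℝ P = ⊤)
    (p : Polynomial ℚ)
    (hp : ∀ k : ℕ, 0 < k →
      p.eval (k : ℚ) =
        (Set.ncard {x : Fin n → ℤ | (fun i => (x i : ℝ)) ∈ (k : ℝ) • P} : ℚ)) :
    ((p.coeff n : ℚ) : ℝ) = (MeasureTheory.volume P).toReal :=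
  ehrhart_polynomial_leading_coeff_eq_volume_general n S P hP p hp
end

section
/- Fix a positive integer m and let p(k,m) denote the number of partitions of k into at most m parts, equivalently p(k,m) = #{x ∈ ℤ^m : x_1 ≥ x_2 ≥ … ≥ x_m ≥ 0 and x_1 + … + x_m = k}. Then p(·,m) is a quasipolynomial of degree m−1 with period L = lcm(1,2,…,m): there exist polynomials p_0,…,p_{L−1} with rational coefficients, each of degree m−1, such that p(k,m) = p_{k mod L}(k) for all positive integers k. -/
/-!
Splitting the partitions of `k + (m + 1)` into at most `m + 1` parts according to whether the last
part vanishes, or removing one from every part otherwise, gives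
`p(k + (m + 1), m + 1) = p(k + (m + 1), m) + p(k, m + 1)`. Iterated across a multiple `L` of `m + 1`
that is a period of `p(·, m)`, this writes `p(k + L, m + 1) - p(k, m + 1)` as a sum of values of
`p(·, m)`, which along each progression `r + nL` is a polynomial in `n` of degree `m - 1` with
positive leading coefficient. Summing over `n` by Faulhaber's formula raises the degree by one.
-/

open Polynomial Finset

namespace Polynomial

noncomputable def sumRangeAntideriv (R : ℚ[X]) : ℚ[X] :=
  ∑ p ∈ range (R.natDegree + 1),
    C (R.coeff p / (p + 1)) * (bernoulli (p + 1) - C (_root_.bernoulli (p + 1)))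

theorem eval_sumRangeAntideriv (R : ℚ[X]) (n : ℕ) :
    (sumRangeAntideriv R).eval (n : ℚ) = ∑ i ∈ range n, R.eval (i : ℚ) := by
  simp_rw [eval_eq_sum_range (p := R), sumRangeAntideriv, eval_finsetSum, eval_mul, eval_sub,
    eval_C, ← Nat.succ_eq_add_one, ← sum_range_pow_eq_bernoulli_sub, sum_comm (s := range n),
    mul_sum]
  refine sum_congr rfl fun p _ => sum_congr rfl fun i _ => ?_
  field_simp

theorem coeff_sumRangeAntideriv (R : ℚ[X]) {j : ℕ} (hj : j ≠ 0) :
    (sumRangeAntideriv R).coeff j = ∑ p ∈ range (R.natDegree + 1),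
      R.coeff p / (p + 1) * if j ≤ p + 1 then _root_.bernoulli (p + 1 - j) * (p + 1).choose j
        else 0 := by
  simp [sumRangeAntideriv, coeff_bernoulli, coeff_C, hj]

theorem coeff_sumRangeAntideriv_natDegree_add_one (R : ℚ[X]) :
    (sumRangeAntideriv R).coeff (R.natDegree + 1) = R.leadingCoeff / (R.natDegree + 1) := by
  rw [coeff_sumRangeAntideriv R (Nat.succ_ne_zero _), sum_eq_single_of_mem R.natDegree
    (self_mem_range_succ _) fun p hp hpd => by
      rw [if_neg (by have := mem_range.1 hp; omega), mul_zero]]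
  simp [coeff_natDegree]

theorem natDegree_sumRangeAntideriv_le (R : ℚ[X]) :
    (sumRangeAntideriv R).natDegree ≤ R.natDegree + 1 := by
  refine natDegree_le_iff_coeff_eq_zero.2 fun j hj => ?_
  rw [coeff_sumRangeAntideriv R (by omega)]
  exact sum_eq_zero fun p hp => by rw [if_neg (by have := mem_range.1 hp; omega), mul_zero]

theorem natDegree_sumRangeAntideriv {R : ℚ[X]} (hR : R ≠ 0) :
    (sumRangeAntideriv R).natDegree = R.natDegree + 1 :=
  natDegree_eq_of_le_of_coeff_ne_zero (natDegree_sumRangeAntideriv_le R) <| by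
    rw [coeff_sumRangeAntideriv_natDegree_add_one]
    exact div_ne_zero (leadingCoeff_ne_zero.2 hR) (by positivity)

theorem leadingCoeff_sumRangeAntideriv {R : ℚ[X]} (hR : R ≠ 0) :
    (sumRangeAntideriv R).leadingCoeff = R.leadingCoeff / (R.natDegree + 1) := by
  rw [leadingCoeff, natDegree_sumRangeAntideriv hR, coeff_sumRangeAntideriv_natDegree_add_one]
end Polynomial

/-- Positivity of the leading coefficients keeps sums of such functions from dropping in degree. -/
def IsPolyOnProgressions (L d : ℕ) (f : ℕ → ℚ) : Prop :=
  ∀ r : ℕ, ∃ Q : ℚ[X], Q.natDegree = d ∧ 0 < Q.leadingCoeff ∧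
    ∀ n : ℕ, Q.eval (n : ℚ) = f (r + n * L)

namespace IsPolyOnProgressions

variable {L d : ℕ} {f g : ℕ → ℚ}

theorem comp_add_const (hf : IsPolyOnProgressions L d f) (a : ℕ) :
    IsPolyOnProgressions L d fun k => f (k + a) := fun r => by
  simpa only [add_right_comm] using hf (r + a)

theorem add (hf : IsPolyOnProgressions L d f) (hg : IsPolyOnProgressions L d g) :
    IsPolyOnProgressions L d (f + g) := fun r => by
  obtain ⟨P, hPd, hP, hPf⟩ := hf r
  obtain ⟨Q, hQd, hQ, hQg⟩ := hg r
  have hcoeff : (P + Q).coeff d = P.leadingCoeff + Q.leadingCoeff := by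
    rw [coeff_add, leadingCoeff, leadingCoeff, hPd, hQd]
  have hdeg : (P + Q).natDegree = d :=
    natDegree_eq_of_le_of_coeff_ne_zero (natDegree_add_le_of_degree_le hPd.le hQd.le)
      (by rw [hcoeff]; positivity)
  refine ⟨P + Q, hdeg, ?_, fun n => by simp [hPf, hQg]⟩
  rw [leadingCoeff, hdeg, hcoeff]
  positivity

theorem sum {ι : Type*} {s : Finset ι} (hs : s.Nonempty) {f : ι → ℕ → ℚ}
    (hf : ∀ i ∈ s, IsPolyOnProgressions L d (f i)) :
    IsPolyOnProgressions L d fun k => ∑ i ∈ s, f i k := by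
  induction hs using Finset.Nonempty.cons_induction with
  | singleton i => simpa using hf i (mem_singleton_self i)
  | cons i s hi hs ih =>
    simp only [sum_cons]
    exact (hf i (mem_cons_self i s)).add (ih fun j hj => hf j (mem_cons_of_mem hj))

theorem of_dvd (hf : IsPolyOnProgressions L d f) {M : ℕ} (hLM : L ∣ M) (hM : M ≠ 0) :
    IsPolyOnProgressions M d f := fun r => by
  obtain ⟨c, rfl⟩ := hLM
  have hc : (0 : ℚ) < c := by exact_mod_cast Nat.pos_of_ne_zero (right_ne_zero_of_mul hM)
  obtain ⟨Q, hQd, hQ, hQf⟩ := hf r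
  refine ⟨Q.comp (C (c : ℚ) * X), ?_, ?_, fun n => ?_⟩
  · rw [natDegree_comp, natDegree_C_mul_X _ hc.ne', mul_one, hQd]
  · rw [leadingCoeff_comp (by rw [natDegree_C_mul_X _ hc.ne']; exact one_ne_zero),
      leadingCoeff_C_mul_X]
    positivity
  · rw [eval_comp, eval_mul, eval_C, eval_X, ← Nat.cast_mul, hQf]
    ring_nf

theorem of_add_period {F : ℕ → ℚ} (hF : IsPolyOnProgressions L d F)
    (hg : ∀ k, g (k + L) = g k + F k) : IsPolyOnProgressions L (d + 1) g := fun r => by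
  obtain ⟨R, hRd, hR, hRF⟩ := hF r
  have hR0 : R ≠ 0 := by rintro rfl; simp at hR
  refine ⟨sumRangeAntideriv R + C (g r), ?_, ?_, fun n => ?_⟩
  · rw [natDegree_add_C, natDegree_sumRangeAntideriv hR0, hRd]
  · rw [leadingCoeff, natDegree_add_C, coeff_add,
      coeff_C_of_ne_zero (by rw [natDegree_sumRangeAntideriv hR0]; omega), add_zero,
      ← leadingCoeff, leadingCoeff_sumRangeAntideriv hR0]
    positivity
  · have hstep (i : ℕ) : g (r + (i + 1) * L) - g (r + i * L) = F (r + i * L) := by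
      rw [add_one_mul, ← add_assoc, hg, add_sub_cancel_left]
    rw [eval_add, eval_C, eval_sumRangeAntideriv]
    simp only [hRF]
    rw [← sum_congr rfl fun i _ => hstep i, sum_range_sub (fun i => g (r + i * L))]
    simp

theorem of_add_of_dvd {s : ℕ} (hL : L ≠ 0) (hs : s ∣ L) (hf : IsPolyOnProgressions L d f)
    (hg : ∀ k, g (k + s) = g k + f (k + s)) : IsPolyOnProgressions L (d + 1) g := by
  obtain ⟨t, rfl⟩ := hs
  refine of_add_period (F := fun k => ∑ j ∈ range t, f (k + (j + 1) * s))
    (sum (nonempty_range_iff.2 (right_ne_zero_of_mul hL)) fun j _ => hf.comp_add_const _)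
    fun k => ?_
  have hstep (j : ℕ) : g (k + (j + 1) * s) - g (k + j * s) = f (k + (j + 1) * s) := by
    rw [add_one_mul, ← add_assoc, hg, add_sub_cancel_left]
  rw [← sum_congr rfl fun j _ => hstep j, sum_range_sub (fun j => g (k + j * s))]
  simp [mul_comm]

theorem exists_quasipolynomial (hL : L ≠ 0) (hf : IsPolyOnProgressions L d f) :
    ∃ p : ℕ → ℚ[X], (∀ r, (p r).natDegree = d) ∧
      ∀ k : ℕ, (p (k % L)).eval (k : ℚ) = f k := by
  choose Q hQd _ hQf using hf
  have hL' : (L : ℚ)⁻¹ ≠ 0 := by positivity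
  refine ⟨fun r => (Q r).comp (C (L : ℚ)⁻¹ * X + C (-(r : ℚ) / L)), fun r => ?_,
    fun k => ?_⟩
  · rw [natDegree_comp, natDegree_linear hL', mul_one, hQd]
  · conv_rhs => rw [← Nat.mod_add_div' k L, ← hQf]
    simp only [eval_comp, eval_add, eval_mul, eval_C, eval_X]
    congr 1
    have hk : (k : ℚ) = (k % L : ℕ) + (k / L : ℕ) * L := by
      exact_mod_cast (Nat.mod_add_div' k L).symm
    rw [hk]
    field_simp
    ring

end IsPolyOnProgressions

def restrictedPartitions (m k : ℕ) : Set (Fin m → ℤ) :=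
  {x | Antitone x ∧ 0 ≤ x ∧ ∑ i, x i = k}

theorem restrictedPartitions_finite (m k : ℕ) : (restrictedPartitions m k).Finite :=
  (Set.finite_Icc (0 : Fin m → ℤ) (fun _ => k)).subset fun _ ⟨_, hx, hsum⟩ =>
    ⟨hx, fun i => hsum ▸ single_le_sum (fun j _ => hx j) (mem_univ i)⟩

theorem restrictedPartitions_one (k : ℕ) : restrictedPartitions 1 k = {fun _ => (k : ℤ)} := by
  ext x
  simp only [restrictedPartitions, Set.mem_ofPred_eq, Set.mem_singleton_iff, Fin.sum_univ_one]
  constructor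
  · rintro ⟨-, -, hx⟩
    exact funext fun i => Subsingleton.elim i 0 ▸ hx
  · rintro rfl
    exact ⟨antitone_const, fun _ => by simp, rfl⟩

theorem snoc_zero_mem_restrictedPartitions_iff {m k : ℕ} {x : Fin m → ℤ} :
    (Fin.snoc x 0 : Fin (m + 1) → ℤ) ∈ restrictedPartitions (m + 1) k ↔
      x ∈ restrictedPartitions m k := by
  simp only [restrictedPartitions, Set.mem_ofPred_eq, Fin.sum_univ_castSucc, Fin.snoc_castSucc,
    Fin.snoc_last, add_zero, Pi.le_def, Fin.forall_fin_succ' (P := fun i => (0 : ℤ) ≤ _),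
    Pi.zero_apply, le_refl, and_true]
  refine ⟨fun ⟨hanti, hx⟩ => ⟨fun i j hij => ?_, hx⟩,
    fun ⟨hanti, hx, hsum⟩ => ⟨?_, hx, hsum⟩⟩
  · simpa using hanti (Fin.castSucc_le_castSucc_iff.2 hij)
  · intro i j hij
    induction j using Fin.lastCases with
    | last =>
      induction i using Fin.lastCases with
      | last => rfl
      | cast i => simpa using hx i
    | cast j =>
      induction i using Fin.lastCases with
      | last => exact absurd hij (not_le.2 (Fin.castSucc_lt_last j))
      | cast i => simpa using hanti (Fin.castSucc_le_castSucc_iff.1 hij)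

theorem add_one_mem_restrictedPartitions {m k : ℕ} {x : Fin m → ℤ}
    (hx : x ∈ restrictedPartitions m k) : x + 1 ∈ restrictedPartitions m (k + m) := by
  obtain ⟨hanti, hnonneg, hsum⟩ := hx
  refine ⟨hanti.add_const 1, fun i => by simpa using (hnonneg i).trans (by simp), ?_⟩
  simp [sum_add_distrib, hsum]

theorem sub_one_mem_restrictedPartitions {m k : ℕ} {y : Fin (m + 1) → ℤ}
    (hy : y ∈ restrictedPartitions (m + 1) (k + (m + 1))) (hlast : y (Fin.last m) ≠ 0) :
    y - 1 ∈ restrictedPartitions (m + 1) k := by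
  obtain ⟨hanti, hnonneg, hsum⟩ := hy
  refine ⟨fun i j hij => sub_le_sub_right (hanti hij) 1, fun i => ?_, ?_⟩
  · have h0 : 0 ≤ y (Fin.last m) := hnonneg _
    have := hanti (Fin.le_last i)
    simp only [Pi.sub_apply, Pi.one_apply, Pi.zero_apply]
    omega
  · simp [sum_sub_distrib, hsum]

theorem restrictedPartitions_succ_add (m k : ℕ) :
    restrictedPartitions (m + 1) (k + (m + 1)) =
      (Fin.snoc · 0) '' restrictedPartitions m (k + (m + 1)) ∪
        (· + 1) '' restrictedPartitions (m + 1) k := by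
  ext y
  constructor
  · intro hy
    by_cases hlast : y (Fin.last m) = 0
    · refine Or.inl ⟨Fin.init y, ?_, by rw [← hlast]; exact Fin.snoc_init_self y⟩
      rwa [← snoc_zero_mem_restrictedPartitions_iff, ← hlast, Fin.snoc_init_self]
    · exact Or.inr ⟨y - 1, sub_one_mem_restrictedPartitions hy hlast, sub_add_cancel y 1⟩
  · rintro (⟨x, hx, rfl⟩ | ⟨x, hx, rfl⟩)
    · exact snoc_zero_mem_restrictedPartitions_iff.2 hx
    · exact add_one_mem_restrictedPartitions hx

theorem ncard_restrictedPartitions_succ_add (m k : ℕ) :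
    (restrictedPartitions (m + 1) (k + (m + 1))).ncard =
      (restrictedPartitions m (k + (m + 1))).ncard + (restrictedPartitions (m + 1) k).ncard := by
  have hdisj : Disjoint ((Fin.snoc · 0) '' restrictedPartitions m (k + (m + 1)))
      ((· + 1) '' restrictedPartitions (m + 1) k) := by
    refine Set.disjoint_left.2 ?_
    rintro _ ⟨x, -, rfl⟩ ⟨y, ⟨-, hy, -⟩, hxy⟩
    have h1 : y (Fin.last m) + 1 = 0 := by simpa using congrFun hxy (Fin.last m)
    have h0 : 0 ≤ y (Fin.last m) := hy _
    omega
  rw [restrictedPartitions_succ_add, Set.ncard_union_eq hdisj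
    ((restrictedPartitions_finite _ _).image _) ((restrictedPartitions_finite _ _).image _),
    Set.ncard_image_of_injective _ (Fin.snoc_left_injective (α := fun _ => ℤ) 0),
    Set.ncard_image_of_injective _ (add_left_injective _)]

theorem lcm_Icc_ne_zero (m : ℕ) : (Icc 1 m).lcm id ≠ 0 := by
  simp [Finset.lcm_eq_zero_iff]

theorem isPolyOnProgressions_ncard_restrictedPartitions {m : ℕ} (hm : 0 < m) :
    IsPolyOnProgressions ((Icc 1 m).lcm id) (m - 1)
      fun k => ((restrictedPartitions m k).ncard : ℚ) := by
  induction m, hm using Nat.le_induction with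
  | base =>
    intro r
    exact ⟨C 1, natDegree_C 1, by simp, fun n => by simp [restrictedPartitions_one]⟩
  | succ m hm ih =>
    have hstep := (ih.of_dvd (lcm_mono (Icc_subset_Icc_right m.le_succ))
      (lcm_Icc_ne_zero (m + 1))).of_add_of_dvd (lcm_Icc_ne_zero (m + 1))
      (dvd_lcm (mem_Icc.2 ⟨by omega, le_rfl⟩))
      (g := fun k => ((restrictedPartitions (m + 1) k).ncard : ℚ))
      fun k => by simp [ncard_restrictedPartitions_succ_add, add_comm]
    rwa [Nat.sub_add_cancel hm] at hstep

/-- The restricted partition function `p(k, m)`, counting partitions of `k` into at most `m`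
parts, is a quasipolynomial of degree `m - 1` with period `L = lcm(1, 2, …, m)`. -/
theorem restricted_partition_function_quasipolynomial
    (m : ℕ) (hm : 0 < m) (L : ℕ) (hL : L = (Finset.Icc 1 m).lcm id) :
    ∃ p : ℕ → Polynomial ℚ,
      (∀ r : ℕ, r < L → (p r).natDegree = m - 1) ∧
      ∀ k : ℕ, 0 < k →
        (p (k % L)).eval (k : ℚ) =
          (Set.ncard {x : Fin m → ℤ |
            (∀ i j : Fin m, i ≤ j → x j ≤ x i) ∧ (∀ i, 0 ≤ x i) ∧ ∑ i, x i = (k : ℤ)} : ℚ) := by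
  subst hL
  obtain ⟨p, hdeg, hval⟩ :=
    (isPolyOnProgressions_ncard_restrictedPartitions hm).exists_quasipolynomial (lcm_Icc_ne_zero m)
  exact ⟨p, fun r _ => hdeg r, fun k _ => hval k⟩
end

section
/- Fix a positive integer m, let p(k,m) = #{x ∈ ℤ^m : x_1 ≥ x_2 ≥ … ≥ x_m ≥ 0 and x_1 + … + x_m = k}, and let p_0,…,p_{L−1} (with L = lcm(1,…,m)) be polynomials such that p(k,m) = p_{k mod L}(k) for all positive integers k. Then for every positive integer k, (−1)^{m−1} · p_{(−k) mod L}(−k) = #{x ∈ ℤ^m : x_1 > x_2 > … > x_m > 0 and x_1 + … + x_m = k}, i.e., up to sign, the quasipolynomial p(·,m) evaluated at −k counts partitions of k into exactly m distinct parts. -/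
/-!
Extend the number of partitions of `n` into at most `m` parts to all `n ∈ ℤ` by taking, for
`n < 0`, `(-1) ^ (m - 1)` times the number of partitions of `-n` into `m` distinct parts.
Subtracting the staircase `(m, …, 1)` identifies partitions of `k` into `m` distinct parts with
partitions of `k - m(m+1)/2` into at most `m` parts, and with this the recurrence
`p(n, m) = p(n, m - 1) + p(n - m, m)` (drop a zero part, or lower every part by one) holds for the
extension on all of `ℤ`. Inverting the difference operator `n ↦ f(n) - f(n - m)` preserves
quasipolynomiality with a period divisible by `m`, so by induction on `m` the extension is a
quasipolynomial of period `lcm(1, …, m)`. Its constituent on the class of `-k` is determined by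
the positive members of the class, where it is `p_{(-k) mod L}`.
-/

open Finset Polynomial

theorem Fin.antitone_snoc_iff {α : Type*} [Preorder α] {n : ℕ} {y : Fin n → α} {c : α} :
    Antitone (Fin.snoc y c : Fin (n + 1) → α) ↔ Antitone y ∧ ∀ i, c ≤ y i := by
  refine ⟨fun h => ⟨fun i j hij => ?_, fun i => ?_⟩, fun ⟨hy, hc⟩ a b hab => ?_⟩
  · simpa using h (Fin.castSucc_le_castSucc_iff.mpr hij)
  · simpa using h (Fin.le_last (Fin.castSucc i))
  · induction b using Fin.lastCases with
    | last => induction a using Fin.lastCases with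
      | last => simp
      | cast a => simpa using hc a
    | cast b => induction a using Fin.lastCases with
      | last => exact absurd hab (Fin.castSucc_lt_last b).not_ge
      | cast a => simpa using hy (Fin.castSucc_le_castSucc_iff.mp hab)

theorem Set.ncard_preimage_add_right {G : Type*} [AddGroup G] (s : Set G) (a : G) :
    ((· + a) ⁻¹' s).ncard = s.ncard :=
  Set.ncard_preimage_of_injective_subset_range (add_left_injective a)
    fun x _ => ⟨x - a, sub_add_cancel x a⟩

def partitionsAtMost (m : ℕ) (k : ℤ) : Set (Fin m → ℤ) :=
  {x | Antitone x ∧ (∀ i, 0 ≤ x i) ∧ ∑ i, x i = k}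

def distinctPartitions (m : ℕ) (k : ℤ) : Set (Fin m → ℤ) :=
  {x | StrictAnti x ∧ (∀ i, 0 < x i) ∧ ∑ i, x i = k}

theorem partitionsAtMost_finite (m : ℕ) (k : ℤ) : (partitionsAtMost m k).Finite := by
  refine (Set.finite_Icc (0 : Fin m → ℤ) (fun _ => k)).subset fun x ⟨_, hx0, hxk⟩ => ⟨hx0, ?_⟩
  intro i
  rw [← hxk]
  exact Finset.single_le_sum (fun j _ => hx0 j) (Finset.mem_univ i)

theorem partitionsAtMost_of_neg {m : ℕ} {k : ℤ} (hk : k < 0) : partitionsAtMost m k = ∅ :=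
  Set.eq_empty_of_forall_notMem fun _ ⟨_, hx0, hxk⟩ =>
    hk.not_ge (hxk ▸ Finset.sum_nonneg fun i _ => hx0 i)

theorem partitionsAtMost_zero (k : ℤ) : partitionsAtMost 0 k = {_x | k = 0} := by
  ext x
  simp [partitionsAtMost, Subsingleton.antitone x, eq_comm]

theorem snoc_zero_mem_partitionsAtMost {m : ℕ} {k : ℤ} {y : Fin m → ℤ} :
    Fin.snoc y 0 ∈ partitionsAtMost (m + 1) k ↔ y ∈ partitionsAtMost m k := by
  simp only [partitionsAtMost, Set.mem_ofPred_eq, Fin.antitone_snoc_iff, Fin.forall_fin_succ',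
    Fin.snoc_castSucc, Fin.snoc_last, Fin.sum_snoc, add_zero, le_refl, and_true]
  tauto

theorem add_one_mem_partitionsAtMost {m : ℕ} {k : ℤ} {y : Fin (m + 1) → ℤ} :
    (y + 1 ∈ partitionsAtMost (m + 1) k ∧ y (Fin.last m) + 1 ≠ 0) ↔
      y ∈ partitionsAtMost (m + 1) (k - (m + 1)) := by
  have hsum : ∑ i, (y i + 1) = ∑ i, y i + (m + 1) := by simp [Finset.sum_add_distrib]
  simp only [partitionsAtMost, Set.mem_ofPred_eq, Pi.add_apply, Pi.one_apply, hsum]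
  constructor
  · rintro ⟨⟨hanti, hnonneg, hk⟩, hlast⟩
    have hy : Antitone y := fun i j hij => by simpa using hanti hij
    refine ⟨hy, fun i => ?_, by linarith⟩
    have : 0 < y (Fin.last m) + 1 := (hnonneg _).lt_of_ne hlast.symm
    linarith [hy (Fin.le_last i)]
  · rintro ⟨hy, hnonneg, hk⟩
    exact ⟨⟨fun i j hij => by simpa using hy hij, fun i => by linarith [hnonneg i], by linarith⟩,
      by linarith [hnonneg (Fin.last m)]⟩

/-- Either the smallest part is zero and can be dropped, or every part can be lowered by one. -/
theorem ncard_partitionsAtMost_succ (m : ℕ) (k : ℤ) :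
    (partitionsAtMost (m + 1) k).ncard =
      (partitionsAtMost m k).ncard + (partitionsAtMost (m + 1) (k - (m + 1))).ncard := by
  set S := partitionsAtMost (m + 1) k
  have hzero : partitionsAtMost m k = (Fin.snoc · 0) ⁻¹' (S ∩ {x | x (Fin.last m) = 0}) := by
    ext y
    simp [S, snoc_zero_mem_partitionsAtMost]
  have hpos :
      partitionsAtMost (m + 1) (k - (m + 1)) = (· + 1) ⁻¹' (S \ {x | x (Fin.last m) = 0}) := by
    ext y
    simp [S, ← add_one_mem_partitionsAtMost]
  rw [hzero, hpos, Set.ncard_preimage_add_right, Set.ncard_preimage_of_injective_subset_range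
    (Fin.snoc_left_injective (α := fun _ => ℤ) 0),
    Set.ncard_inter_add_ncard_sdiff_eq_ncard _ _ (partitionsAtMost_finite _ _)]
  rintro x ⟨-, hx⟩
  exact ⟨Fin.init x, by simp only [← show x (Fin.last m) = 0 from hx, Fin.snoc_init_self]⟩

/-- The staircase `(m, m - 1, …, 1)`, the smallest partition into `m` distinct parts. -/
def staircase (m : ℕ) : Fin m → ℤ := fun i => m - i

theorem sum_staircase_succ (m : ℕ) :
    ∑ i, staircase (m + 1) i = ∑ i, staircase m i + (m + 1) := by
  rw [Fin.sum_univ_succ, add_comm]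
  simp [staircase]

theorem sum_staircase_nonneg (m : ℕ) : 0 ≤ ∑ i, staircase m i :=
  Finset.sum_nonneg fun i _ => sub_nonneg.mpr (by exact_mod_cast i.isLt.le)

theorem add_staircase_mem_distinctPartitions {m : ℕ} {k : ℤ} {y : Fin m → ℤ} :
    y + staircase m ∈ distinctPartitions m k ↔
      y ∈ partitionsAtMost m (k - ∑ i, staircase m i) := by
  have hsum : ∑ i, (y + staircase m) i = ∑ i, y i + ∑ i, staircase m i :=
    Finset.sum_add_distrib
  rw [distinctPartitions, partitionsAtMost, Set.mem_ofPred_eq, Set.mem_ofPred_eq, hsum,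
    ← eq_sub_iff_add_eq]
  rcases m with _ | n
  · simp [Subsingleton.antitone y, StrictAnti]
  have hanti : StrictAnti (y + staircase (n + 1)) ↔ Antitone y := by
    rw [Fin.strictAnti_iff_succ_lt, Fin.antitone_iff_succ_le]
    refine forall_congr' fun i => ?_
    simp only [Pi.add_apply, staircase, Fin.val_succ, Fin.val_castSucc]
    push_cast
    omega
  rw [hanti, and_congr_right_iff]
  intro hy
  refine and_congr_left fun _ => ⟨fun h i => ?_, fun h i => ?_⟩
  · have hlast := h (Fin.last n)
    simp only [Pi.add_apply, staircase, Fin.val_last] at hlast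
    push_cast at hlast
    linarith [hy (Fin.le_last i)]
  · simp only [Pi.add_apply, staircase]
    push_cast
    linarith [h i, show ((i : ℕ) : ℤ) < n + 1 by exact_mod_cast i.isLt]

theorem ncard_distinctPartitions (m : ℕ) (k : ℤ) :
    (distinctPartitions m k).ncard = (partitionsAtMost m (k - ∑ i, staircase m i)).ncard := by
  rw [← Set.ncard_preimage_add_right _ (staircase m)]
  congr 1
  ext y
  exact add_staircase_mem_distinctPartitions

/-- For `n > 0` the second term vanishes and this counts partitions of `n` into at most `m`
parts; for `n < 0` the first term vanishes and, by `ncard_distinctPartitions`, this is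
`(-1) ^ (m - 1)` times the number of partitions of `-n` into `m` distinct parts. -/
noncomputable def partitionCountExt (m : ℕ) (n : ℤ) : ℚ :=
  (partitionsAtMost m n).ncard - (-1) ^ m * (partitionsAtMost m (-n - ∑ i, staircase m i)).ncard

theorem partitionCountExt_zero : partitionCountExt 0 = 0 := by
  ext n
  simp [partitionCountExt, partitionsAtMost_zero, staircase]

theorem partitionCountExt_succ_sub (m : ℕ) (n : ℤ) :
    partitionCountExt (m + 1) n - partitionCountExt (m + 1) (n - (m + 1)) =
      partitionCountExt m n := by
  have e₁ : -(n - (m + 1)) - (∑ i, staircase m i + (m + 1)) = -n - ∑ i, staircase m i := by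
    ring
  have e₂ : -n - (∑ i, staircase m i + (m + 1)) = -n - ∑ i, staircase m i - (m + 1) := by ring
  simp only [partitionCountExt, sum_staircase_succ, e₁, e₂, ncard_partitionsAtMost_succ m n,
    ncard_partitionsAtMost_succ m (-n - ∑ i, staircase m i)]
  push_cast
  ring

theorem partitionCountExt_of_pos {m : ℕ} {n : ℤ} (hn : 0 < n) :
    partitionCountExt m n = (partitionsAtMost m n).ncard := by
  rw [partitionCountExt,
    partitionsAtMost_of_neg (k := -n - _) (by linarith [sum_staircase_nonneg m])]
  simp

theorem neg_one_pow_mul_partitionCountExt_neg {m : ℕ} {k : ℤ} (hk : 0 < k) :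
    (-1) ^ (m - 1) * partitionCountExt m (-k) = (distinctPartitions m k).ncard := by
  rw [ncard_distinctPartitions]
  rcases m with _ | m
  · simp [partitionCountExt_zero, partitionsAtMost_zero, staircase, hk.ne']
  · rw [partitionCountExt, partitionsAtMost_of_neg (by linarith), neg_neg]
    simp [pow_succ, ← mul_assoc, ← mul_pow]

theorem Polynomial.exists_eval_add_one_sub_eval (P : ℚ[X]) :
    ∃ Q : ℚ[X], ∀ x, Q.eval (x + 1) - Q.eval x = P.eval x := by
  induction P using Polynomial.induction_on' with
  | add P R hP hR =>
    obtain ⟨Q, hQ⟩ := hP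
    obtain ⟨S, hS⟩ := hR
    exact ⟨Q + S, fun x => by simp only [eval_add, ← hQ, ← hS]; ring⟩
  | monomial n c =>
    refine ⟨C (c / (n + 1)) * bernoulli (n + 1), fun x => ?_⟩
    simp only [eval_mul, eval_C, eval_monomial, add_comm x 1, bernoulli_eval_one_add]
    push_cast
    field_simp
    simp only [add_sub_cancel_left]
    ring

theorem exists_polynomial_of_sub_eq_eval {h : ℤ → ℚ} {P : ℚ[X]}
    (hP : ∀ t, h (t + 1) - h t = P.eval (t : ℚ)) :
    ∃ H : ℚ[X], ∀ t, h t = H.eval (t : ℚ) := by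
  obtain ⟨Q, hQ⟩ := P.exists_eval_add_one_sub_eval
  have hper : Function.Periodic (fun t : ℤ => h t - Q.eval (t : ℚ)) 1 := fun t => by
    have := hQ t
    push_cast
    linarith [hP t]
  refine ⟨Q + C (h 0 - Q.eval 0), fun t => ?_⟩
  have := hper.int_mul_eq t
  simp only [mul_one, Int.cast_zero, Int.cast_id] at this
  simp only [eval_add, eval_C]
  linarith

def IsQuasiPolynomial (L : ℕ) (f : ℤ → ℚ) : Prop :=
  ∀ c : ℤ, ∃ q : ℚ[X], ∀ n, n ≡ c [ZMOD L] → f n = q.eval (n : ℚ)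

namespace IsQuasiPolynomial

variable {L : ℕ} {f : ℤ → ℚ}

theorem of_dvd {L' : ℕ} (hf : IsQuasiPolynomial L f) (h : L ∣ L') : IsQuasiPolynomial L' f :=
  fun c => (hf c).imp fun _ hq n hn => hq n (hn.of_dvd (Int.natCast_dvd_natCast.mpr h))

theorem comp_sub_const (hf : IsQuasiPolynomial L f) (a : ℤ) :
    IsQuasiPolynomial L (fun n => f (n - a)) := fun c => by
  obtain ⟨q, hq⟩ := hf (c - a)
  exact ⟨q.comp (X - C (a : ℚ)), fun n hn => by simpa using hq (n - a) (hn.sub_right a)⟩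

theorem finsetSum {ι : Type*} (s : Finset ι) {f : ι → ℤ → ℚ}
    (hf : ∀ i ∈ s, IsQuasiPolynomial L (f i)) :
    IsQuasiPolynomial L (fun n => ∑ i ∈ s, f i n) := fun c => by
  choose! q hq using fun i hi => hf i hi c
  exact ⟨∑ i ∈ s, q i, fun n hn => by
    rw [eval_finsetSum]; exact Finset.sum_congr rfl fun i hi => hq i hi n hn⟩

/-- Along a residue class `c + Lℤ`, the polynomial differences integrate to a polynomial in the
step count `t`, hence in `n = c + tL`. -/
theorem of_sub_period (hL : 0 < L) (h : IsQuasiPolynomial L (fun n => f n - f (n - L))) :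
    IsQuasiPolynomial L f := fun c => by
  obtain ⟨P, hP⟩ := h c
  obtain ⟨H, hH⟩ := exists_polynomial_of_sub_eq_eval (h := fun t => f (c + t * L))
    (P := P.comp (C ((c + L : ℤ) : ℚ) + C (L : ℚ) * X)) fun t => by
      have := hP (c + (t + 1) * L) (Int.add_mul_emod_self_right _ _ _)
      simp only [eval_comp, eval_add, eval_mul, eval_C, eval_X] at this ⊢
      rw [show c + (t + 1) * (L : ℤ) - L = c + t * L by ring] at this
      push_cast at this ⊢
      rw [this]
      ring_nf
  refine ⟨H.comp (C (L⁻¹ : ℚ) * (X - C (c : ℚ))), fun n hn => ?_⟩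
  obtain ⟨t, ht⟩ := hn.symm.dvd
  obtain rfl : n = c + t * L := by linarith
  rw [hH t]
  have hL' : (L : ℚ) ≠ 0 := by positivity
  simp only [eval_comp, eval_mul, eval_C, eval_sub, eval_X]
  push_cast
  rw [add_sub_cancel_left, mul_comm, mul_assoc, mul_inv_cancel₀ hL', mul_one]

theorem of_sub_shift {d : ℕ} (hL : 0 < L) (hd : d ∣ L)
    (h : IsQuasiPolynomial L (fun n => f n - f (n - d))) : IsQuasiPolynomial L f := by
  obtain ⟨N, rfl⟩ := hd
  refine of_sub_period hL ?_
  have htel : (fun n => f n - f (n - (d * N : ℕ))) =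
      fun n => ∑ i ∈ range N, (fun n => f n - f (n - d)) (n - i * d) := funext fun n => by
    have := Finset.sum_range_sub' (fun i : ℕ => f (n - i * d)) N
    push_cast at this ⊢
    rw [zero_mul, sub_zero] at this
    rw [mul_comm, ← this]
    exact Finset.sum_congr rfl fun i _ => by ring_nf
  rw [htel]
  exact finsetSum _ fun i _ => h.comp_sub_const _

theorem eval_eq_of_forall_pos (hf : IsQuasiPolynomial L f) (hL : 0 < L) {p : ℚ[X]} {c : ℤ}
    (hp : ∀ n : ℤ, 0 < n → n ≡ c [ZMOD L] → p.eval (n : ℚ) = f n) :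
    ∀ n, n ≡ c [ZMOD L] → p.eval (n : ℚ) = f n := by
  obtain ⟨q, hq⟩ := hf c
  have hmod (j : ℕ) : c + (j + |c| + 1) * L ≡ c [ZMOD L] := Int.add_mul_emod_self_right _ _ _
  have hpos (j : ℕ) : 0 < c + (j + |c| + 1) * L := by
    have : (1 : ℤ) ≤ L := by exact_mod_cast hL
    nlinarith [neg_abs_le c, mul_le_mul_of_nonneg_left this (by positivity : (0 : ℤ) ≤ j + |c| + 1)]
  have hpq : p = q := by
    refine p.eq_of_infinite_eval_eq q <| Set.infinite_of_injective_forall_mem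
      (f := fun j : ℕ => ((c + (j + |c| + 1) * L : ℤ) : ℚ)) (fun a b hab => ?_) fun j => ?_
    · have : ((a : ℤ) + |c| + 1) * L = (b + |c| + 1) * L := by
        simpa using (Int.cast_injective hab : _)
      exact_mod_cast add_right_cancel (add_right_cancel (mul_right_cancel₀ (by positivity) this))
    · exact (hp _ (hpos j) (hmod j)).trans (hq _ (hmod j))
  intro n hn
  rw [hpq, hq n hn]

end IsQuasiPolynomial

theorem isQuasiPolynomial_partitionCountExt (m : ℕ) :
    IsQuasiPolynomial ((Icc 1 m).lcm id) (partitionCountExt m) := by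
  induction m with
  | zero => exact partitionCountExt_zero ▸ fun _ => ⟨0, by simp⟩
  | succ m ih =>
    refine .of_sub_shift (d := m + 1) (Nat.pos_of_ne_zero (by simp [Finset.lcm_eq_zero_iff]))
      (dvd_lcm (by simp)) ?_
    have hsub := ih.of_dvd (lcm_mono (Icc_subset_Icc_right m.le_succ))
    simpa only [Nat.cast_succ, partitionCountExt_succ_sub] using hsub

theorem restricted_partition_function_reciprocity_general
    (m : ℕ) (L : ℕ) (hL : L = (Finset.Icc 1 m).lcm id)
    (p : ℕ → Polynomial ℚ)
    (hp : ∀ k : ℕ, 0 < k →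
      (p (k % L)).eval (k : ℚ) =
        (Set.ncard {x : Fin m → ℤ |
          (∀ i j : Fin m, i ≤ j → x j ≤ x i) ∧ (∀ i, 0 ≤ x i) ∧ ∑ i, x i = (k : ℤ)} : ℚ)) :
    ∀ k : ℕ, 0 < k →
      (-1 : ℚ) ^ (m - 1) * (p ((-(k : ℤ)) % (L : ℤ)).toNat).eval (-(k : ℚ)) =
        (Set.ncard {x : Fin m → ℤ |
          (∀ i j : Fin m, i < j → x j < x i) ∧ (∀ i, 0 < x i) ∧ ∑ i, x i = (k : ℤ)} : ℚ) := by
  intro k hk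
  have hLpos : 0 < L := hL ▸ Nat.pos_of_ne_zero (by simp [Finset.lcm_eq_zero_iff])
  have hT : IsQuasiPolynomial L (partitionCountExt m) :=
    hL ▸ isQuasiPolynomial_partitionCountExt m
  set r := ((-(k : ℤ)) % L).toNat
  have hr : (r : ℤ) = (-(k : ℤ)) % L := Int.toNat_of_nonneg (Int.emod_nonneg _ (by positivity))
  have hagree := hT.eval_eq_of_forall_pos hLpos (p := p r) (c := -k) fun n hn hnk => by
    lift n to ℕ using hn.le
    have hnr : n % L = r := by
      have : ((n % L : ℕ) : ℤ) = r := by rw [Int.natCast_mod, hr]; exact hnk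
      exact_mod_cast this
    rw [← hnr, Int.cast_natCast, hp n (by exact_mod_cast hn), partitionCountExt_of_pos hn]
    rfl
  calc (-1 : ℚ) ^ (m - 1) * (p r).eval (-(k : ℚ))
      = (-1) ^ (m - 1) * partitionCountExt m (-k) := by rw [← hagree (-k) rfl]; push_cast; rfl
    _ = (distinctPartitions m k).ncard :=
      neg_one_pow_mul_partitionCountExt_neg (by exact_mod_cast hk)

/-- Reciprocity for the restricted partition function: up to sign, the quasipolynomial
`p(·, m)` for partitions into at most `m` parts, evaluated at `-k`, counts partitions of `k`
into exactly `m` distinct parts. -/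
theorem restricted_partition_function_reciprocity
    (m : ℕ) (hm : 0 < m) (L : ℕ) (hL : L = (Finset.Icc 1 m).lcm id)
    (p : ℕ → Polynomial ℚ)
    (hp : ∀ k : ℕ, 0 < k →
      (p (k % L)).eval (k : ℚ) =
        (Set.ncard {x : Fin m → ℤ |
          (∀ i j : Fin m, i ≤ j → x j ≤ x i) ∧ (∀ i, 0 ≤ x i) ∧ ∑ i, x i = (k : ℤ)} : ℚ)) :
    ∀ k : ℕ, 0 < k →
      (-1 : ℚ) ^ (m - 1) * (p ((-(k : ℤ)) % (L : ℤ)).toNat).eval (-(k : ℚ)) =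
        (Set.ncard {x : Fin m → ℤ |
          (∀ i j : Fin m, i < j → x j < x i) ∧ (∀ i, 0 < x i) ∧ ∑ i, x i = (k : ℤ)} : ℚ) :=
  restricted_partition_function_reciprocity_general m L hL p hp
end

section
/- (Stanley's reciprocity theorem for the chromatic polynomial) Let G be a finite simple graph with vertex set V, and let χ_G be the polynomial with χ_G(k) equal to the number of proper k-colorings of G for all positive integers k. Then for every positive integer k, (−1)^{|V|} · χ_G(−k) equals the number of pairs (x, o) where x : V → {1,…,k} is a (not necessarily proper) k-coloring and o is an acyclic orientation of G compatible with x. -/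
/-!
Realise the chromatic polynomial by Whitney's expansion `χ_G = ∑_{S ⊆ E} (-1)^|S| X^c(S)`, with
`c(S)` the number of components of `(V, S)`. As `k^c(S)` counts the `k`-colorings constant on the
edges of `S`, exchanging sums gives `χ_G(z k) = ∑_x χ_{G_x}(z)` over all colorings `x`, where
`G_x` keeps the monochromatic edges. At `z = 1` this says that `χ_G` counts proper colorings; at
`z = -1` it reduces the theorem to `(-1)^|V| χ_H(-1) = #{acyclic orientations of H}`, since a
compatible orientation is forced on the edges joining different colors.

For that identity, both sides satisfy `f(H) = -∑ (-1)^|U| f(H - U)` over the nonempty independent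
sets `U`. For the polynomial, split off the last color class, `χ_H(X + 1) = ∑_U χ_{H-U}(X)`, and
evaluate at `X = -1` using `χ_H(0) = 0`. For orientations, use inclusion-exclusion on the sets of
sources: they are independent, and nonempty by acyclicity.
-/

namespace ChromaticReciprocity

open Finset Polynomial SimpleGraph Relation

variable {V : Type*}

/-! ### Whitney's expansion -/

noncomputable def numComponents (S : Set (Sym2 V)) : ℕ :=
  Nat.card (fromEdgeSet S).ConnectedComponent

/-- The chromatic polynomial, by Whitney's subgraph expansion. -/
noncomputable def chromaticPoly [Finite V] (G : SimpleGraph V) : ℤ[X] :=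
  ∑ S ∈ G.edgeSet.toFinite.toFinset.powerset, (-1) ^ #S * X ^ numComponents (S : Set (Sym2 V))

def properColorings (G : SimpleGraph V) (α : Type*) : Set (V → α) :=
  {x | ∀ v w, G.Adj v w → x v ≠ x w}

def monochromaticSubgraph {α : Type*} (G : SimpleGraph V) (x : V → α) : SimpleGraph V where
  Adj a b := G.Adj a b ∧ x a = x b
  symm := ⟨fun _ _ h => ⟨h.1.symm, h.2.symm⟩⟩
  loopless := ⟨fun a h => G.loopless.irrefl a h.1⟩

lemma eq_of_reachable_of_forall_adj {α : Type*} {H : SimpleGraph V} {f : V → α}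
    (hf : ∀ v w, H.Adj v w → f v = f w) {v w : V} (h : H.Reachable v w) : f v = f w := by
  rw [reachable_iff_reflTransGen] at h
  induction h with
  | refl => rfl
  | tail _ hbc ih => exact ih.trans (hf _ _ hbc)

def constantOnComponentsEquiv (H : SimpleGraph V) (α : Type*) :
    {f : V → α // ∀ v w, H.Adj v w → f v = f w} ≃ (H.ConnectedComponent → α) where
  toFun f := ConnectedComponent.lift f.1 fun _ _ p _ =>
    eq_of_reachable_of_forall_adj f.2 p.reachable
  invFun g := ⟨fun v => g (H.connectedComponentMk v),
    fun _ _ h => congrArg g (ConnectedComponent.sound h.reachable)⟩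
  left_inv _ := rfl
  right_inv _ := funext fun c => c.ind fun _ => rfl

lemma card_pow_numComponents [Finite V] (α : Type*) (S : Set (Sym2 V)) :
    Nat.card α ^ numComponents S = Nat.card {x : V → α // ∀ e ∈ S, (e.map x).IsDiag} := by
  have hS : ∀ x : V → α, (∀ e ∈ S, (e.map x).IsDiag) ↔
      ∀ v w, (fromEdgeSet S).Adj v w → x v = x w := fun x =>
    ⟨fun h v w hvw => by simpa using h _ hvw.1,
     fun h e he => e.ind (fun v w he => by
       by_cases hvw : v = w
       · simp [hvw]
       · simpa using h v w ⟨he, hvw⟩) he⟩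
  rw [Nat.card_congr ((Equiv.subtypeEquivRight hS).trans (constantOnComponentsEquiv _ α)),
    Nat.card_fun, numComponents]

lemma mem_edgeSet_monochromaticSubgraph {α : Type*} {G : SimpleGraph V} {x : V → α}
    {e : Sym2 V} : e ∈ (monochromaticSubgraph G x).edgeSet ↔ e ∈ G.edgeSet ∧ (e.map x).IsDiag :=
  e.ind fun _ _ => by simp [monochromaticSubgraph]

theorem eval_chromaticPoly_mul_card [Fintype V] [DecidableEq V] (G : SimpleGraph V) (α : Type*)
    [Fintype α] (z : ℤ) : (chromaticPoly G).eval (z * Fintype.card α) =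
      ∑ x : V → α, (chromaticPoly (monochromaticSubgraph G x)).eval z := by
  classical
  have hpowerset : ∀ x : V → α, (monochromaticSubgraph G x).edgeSet.toFinite.toFinset.powerset =
      G.edgeSet.toFinite.toFinset.powerset.filter (fun S => ∀ e ∈ S, (e.map x).IsDiag) := by
    intro x
    ext S
    simp only [mem_powerset, mem_filter, subset_iff, Set.Finite.mem_toFinset,
      mem_edgeSet_monochromaticSubgraph]
    exact ⟨fun h => ⟨fun e he => (h he).1, fun e he => (h he).2⟩, fun h e he => ⟨h.1 he, h.2 e he⟩⟩
  simp only [chromaticPoly, eval_finsetSum, hpowerset, sum_filter]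
  rw [sum_comm]
  refine sum_congr rfl fun S _ => ?_
  have hcard := card_pow_numComponents α (S : Set (Sym2 V))
  simp only [Nat.card_eq_fintype_card, Fintype.card_subtype, mem_coe] at hcard
  simp only [eval_mul, eval_pow, eval_neg, eval_one, eval_X, mul_pow, ← Nat.cast_pow, hcard,
    card_filter, Nat.cast_sum, mul_sum]
  refine sum_congr rfl fun x _ => ?_
  split_ifs <;> simp

open Classical in
lemma eval_chromaticPoly_one [Finite V] (H : SimpleGraph V) :
    (chromaticPoly H).eval 1 = if H = ⊥ then 1 else 0 := by
  simp only [chromaticPoly, eval_finsetSum, eval_mul, eval_pow, eval_neg, eval_one, eval_X,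
    one_pow, mul_one, sum_powerset_neg_one_pow_card, Set.Finite.toFinset_eq_empty,
    edgeSet_eq_empty]

lemma monochromaticSubgraph_eq_bot_iff {α : Type*} {G : SimpleGraph V} {x : V → α} :
    monochromaticSubgraph G x = ⊥ ↔ x ∈ properColorings G α := by
  simp [SimpleGraph.ext_iff, funext_iff, monochromaticSubgraph, properColorings]

theorem eval_chromaticPoly_natCast [Fintype V] (G : SimpleGraph V) (k : ℕ) :
    (chromaticPoly G).eval (k : ℤ) = Nat.card (properColorings G (Fin k)) := by
  classical
  have h := eval_chromaticPoly_mul_card G (Fin k) 1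
  rw [one_mul, Fintype.card_fin] at h
  simp only [h, eval_chromaticPoly_one, monochromaticSubgraph_eq_bot_iff, sum_boole,
    Nat.card_eq_fintype_card, Fintype.card_ofFinset]

lemma eval_chromaticPoly_zero [Fintype V] [Nonempty V] (H : SimpleGraph V) :
    (chromaticPoly H).eval 0 = 0 := by
  simpa using eval_chromaticPoly_natCast H 0

lemma chromaticPoly_of_isEmpty [IsEmpty V] (H : SimpleGraph V) : chromaticPoly H = 1 := by
  simp [chromaticPoly, numComponents, Set.eq_empty_of_isEmpty]

lemma eq_of_eval_natCast_eq {p q : ℤ[X]} (h : ∀ k : ℕ, 0 < k → p.eval (k : ℤ) = q.eval (k : ℤ)) :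
    p = q := by
  refine eq_of_infinite_eval_eq p q <|
    ((Set.Ioi_infinite 0).image Nat.cast_injective.injOn).mono ?_
  rintro _ ⟨k, hk, rfl⟩
  exact h k hk

lemma card_properColorings_congr {W : Type*} {G : SimpleGraph V} {G' : SimpleGraph W}
    (φ : G ≃g G') (α : Type*) :
    Nat.card (properColorings G α) = Nat.card (properColorings G' α) := by
  refine Nat.card_congr (Equiv.subtypeEquiv (φ.toEquiv.arrowCongr (Equiv.refl α)) fun x => ?_)
  simp only [properColorings, Set.mem_ofPred_eq, Equiv.arrowCongr_apply, Equiv.coe_refl,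
    Function.comp_apply, id]
  refine ⟨fun h v w hvw => h _ _ (φ.symm.map_adj_iff.2 hvw), fun h v w hvw => ?_⟩
  simpa only [show ∀ u, φ.toEquiv.symm (φ u) = u from φ.toEquiv.symm_apply_apply] using
    h (φ v) (φ w) (φ.map_adj_iff.2 hvw)

lemma chromaticPoly_congr {W : Type*} [Fintype V] [Fintype W] {G : SimpleGraph V}
    {G' : SimpleGraph W} (φ : G ≃g G') : chromaticPoly G = chromaticPoly G' :=
  eq_of_eval_natCast_eq fun k _ => by
    rw [eval_chromaticPoly_natCast, eval_chromaticPoly_natCast, card_properColorings_congr φ]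

/-! ### Removing the last color class -/

open Classical in
noncomputable def indepSets [Fintype V] (H : SimpleGraph V) : Finset (Finset V) :=
  univ.filter fun U => H.IsIndepSet U

lemma mem_indepSets [Fintype V] {H : SimpleGraph V} {U : Finset V} :
    U ∈ indepSets H ↔ H.IsIndepSet U := by
  simp [indepSets]

open Classical in
noncomputable def lastColorClassEquiv (H : SimpleGraph V) (m : ℕ) {U : Set V}
    (hU : H.IsIndepSet U) :
    {x : properColorings H (Fin (m + 1)) // ∀ v, x.1 v = Fin.last m ↔ v ∈ U} ≃
      properColorings (H.induce Uᶜ) (Fin m) where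
  toFun x := ⟨fun v => (x.1.1 v).castPred fun h => v.2 ((x.2 v).1 h),
    fun _ _ hab h => x.1.2 _ _ hab (Fin.castPred_inj.1 h)⟩
  invFun y := ⟨⟨fun v => if hv : v ∈ U then Fin.last m else (y.1 ⟨v, hv⟩).castSucc,
    fun a b hab => by
      by_cases ha : a ∈ U <;> by_cases hb : b ∈ U <;> simp only [ha, hb, dite_true, dite_false]
      · exact absurd hab (hU ha hb hab.ne)
      · exact (Fin.castSucc_lt_last _).ne'
      · exact (Fin.castSucc_lt_last _).ne
      · exact fun h => y.2 ⟨a, ha⟩ ⟨b, hb⟩ hab (Fin.castSucc_inj.1 h)⟩,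
    fun v => by by_cases hv : v ∈ U <;> simp [hv, (Fin.castSucc_lt_last _).ne]⟩
  left_inv x := by
    refine Subtype.ext (Subtype.ext (funext fun v => ?_))
    by_cases hv : v ∈ U
    · simp [hv, (x.2 v).2 hv]
    · simp [hv]
  right_inv y := by
    refine Subtype.ext (funext fun v => ?_)
    have hv : (v : V) ∉ U := v.2
    simp [hv]

theorem card_properColorings_succ [Fintype V] [DecidableEq V] (H : SimpleGraph V) (m : ℕ) :
    Nat.card (properColorings H (Fin (m + 1))) =
      ∑ U ∈ indepSets H, Nat.card (properColorings (H.induce (↑U)ᶜ) (Fin m)) := by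
  let lastColorClass (x : properColorings H (Fin (m + 1))) : Finset V :=
    univ.filter fun v => x.1 v = Fin.last m
  have hfiber (U : Finset V) : {x // lastColorClass x = U} ≃
      {x : properColorings H (Fin (m + 1)) // ∀ v, x.1 v = Fin.last m ↔ v ∈ (U : Set V)} :=
    Equiv.subtypeEquivRight fun x => by simp [lastColorClass, Finset.ext_iff]
  rw [← Nat.card_congr (Equiv.sigmaFiberEquiv lastColorClass), Nat.card_sigma,
    ← sum_subset (subset_univ (indepSets H))]
  · refine sum_congr rfl fun U hU => ?_
    exact Nat.card_congr ((hfiber U).trans (lastColorClassEquiv H m (mem_indepSets.1 hU)))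
  · intro U _ hU
    refine Nat.card_eq_zero.2 (Or.inl ⟨fun ⟨x, hx⟩ => hU (mem_indepSets.2 ?_)⟩)
    intro a ha b hb _ hab
    rw [← hx] at ha hb
    simp only [lastColorClass, coe_filter, mem_univ, true_and, Set.mem_ofPred_eq] at ha hb
    exact x.2 a b hab (ha.trans hb.symm)

theorem chromaticPoly_comp_X_add_one [Fintype V] [DecidableEq V] (H : SimpleGraph V) :
    (chromaticPoly H).comp (X + 1) = ∑ U ∈ indepSets H, chromaticPoly (H.induce (↑U)ᶜ) :=
  eq_of_eval_natCast_eq fun k _ => by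
    rw [eval_comp, eval_add, eval_X, eval_one, ← Nat.cast_succ, eval_finsetSum]
    simp only [eval_chromaticPoly_natCast]
    exact_mod_cast card_properColorings_succ H k

lemma card_compl_coe [Fintype V] [DecidableEq V] (U : Finset V) :
    Fintype.card ↥(↑U : Set V)ᶜ = Fintype.card V - #U := by
  rw [Fintype.card_compl_set]
  simp

theorem neg_one_pow_card_mul_eval_neg_one_eq_sum [Fintype V] [DecidableEq V] [Nonempty V]
    (H : SimpleGraph V) : (-1 : ℤ) ^ Fintype.card V * (chromaticPoly H).eval (-1) =
      -∑ U ∈ (indepSets H).erase ∅, (-1) ^ #U *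
        ((-1) ^ Fintype.card ↥(↑U : Set V)ᶜ * (chromaticPoly (H.induce (↑U)ᶜ)).eval (-1)) := by
  have hiso : H.induce (↑(∅ : Finset V))ᶜ ≃g H := ⟨Equiv.subtypeUnivEquiv (by simp), Iff.rfl⟩
  have h := congrArg (eval (-1)) (chromaticPoly_comp_X_add_one H)
  rw [eval_comp, eval_add, eval_X, eval_one, neg_add_cancel, eval_chromaticPoly_zero,
    eval_finsetSum, ← add_sum_erase _ _ (show ∅ ∈ indepSets H from mem_indepSets.2 (by simp)),
    chromaticPoly_congr hiso] at h
  rw [eq_neg_of_add_eq_zero_left h.symm, mul_neg, mul_sum]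
  refine congrArg _ (sum_congr rfl fun U _ => ?_)
  rw [← mul_assoc, ← pow_add, card_compl_coe, Nat.add_sub_cancel' (card_le_univ U)]

/-! ### Acyclic orientations -/

structure IsAcyclicOrientation (H : SimpleGraph V) (D : V → V → Prop) : Prop where
  adj : ∀ ⦃v w⦄, D v w → H.Adj v w
  iff_not : ∀ ⦃v w⦄, H.Adj v w → (D v w ↔ ¬ D w v)
  acyclic : ∀ v, ¬ TransGen D v v

lemma acyclic_of_rank {β : Type*} [Preorder β] {D : V → V → Prop} (f : V → β)
    (hf : ∀ ⦃v w⦄, D v w → f v < f w) (v : V) : ¬ TransGen D v v := by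
  suffices ∀ {a b}, TransGen D a b → f a < f b from fun h => lt_irrefl _ (this h)
  intro a b h
  induction h with
  | single h => exact hf h
  | tail _ h ih => exact ih.trans (hf h)

/-- Counting strict predecessors gives a rank function. -/
lemma exists_rank_of_acyclic [Finite V] {D : V → V → Prop} (hD : ∀ v, ¬ TransGen D v v) :
    ∃ f : V → ℕ, ∀ ⦃v w⦄, D v w → f v < f w := by
  refine ⟨fun w => {u | TransGen D u w}.ncard, fun v w h => Set.ncard_lt_ncard ?_ (Set.toFinite _)⟩
  exact Set.ssubset_iff_of_subset (fun u hu => TransGen.tail hu h) |>.2 ⟨v, .single h, hD v⟩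

lemma exists_source [Finite V] [Nonempty V] {D : V → V → Prop} (hD : ∀ v, ¬ TransGen D v v) :
    ∃ v, ∀ w, ¬ D w v := by
  obtain ⟨f, hf⟩ := exists_rank_of_acyclic hD
  obtain ⟨v, hv⟩ := Finite.exists_min f
  exact ⟨v, fun w h => (hv w).not_gt (hf h)⟩

lemma IsAcyclicOrientation.isIndepSet_sources {H : SimpleGraph V} {D : V → V → Prop}
    (hD : IsAcyclicOrientation H D) : H.IsIndepSet {v | ∀ w, ¬ D w v} :=
  fun _ hv _ hw _ h => hw _ ((hD.iff_not h).2 (hv _))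

open Classical in
noncomputable def sourcesEquiv [Finite V] (H : SimpleGraph V) {U : Set V} (hU : H.IsIndepSet U) :
    {D // IsAcyclicOrientation H D ∧ ∀ u ∈ U, ∀ w, ¬ D w u} ≃
      {D // IsAcyclicOrientation (H.induce Uᶜ) D} where
  toFun D := ⟨fun a b => D.1 a b,
    ⟨fun _ _ h => D.2.1.adj h, fun _ _ h => D.2.1.iff_not h,
      fun v hv => D.2.1.acyclic v (hv.lift _ fun _ _ h => h)⟩⟩
  invFun D := ⟨fun a b => if ha : a ∈ U then H.Adj a b
      else if hb : b ∈ U then False else D.1 ⟨a, ha⟩ ⟨b, hb⟩, by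
    have hU' : ∀ ⦃a b⦄, a ∈ U → H.Adj a b → b ∉ U := fun a b ha h hb => hU ha hb h.ne h
    refine ⟨⟨fun a b h => ?_, fun a b h => ?_, ?_⟩, fun u hu w => ?_⟩
    · by_cases ha : a ∈ U <;> by_cases hb : b ∈ U <;> simp only [ha, hb, dite_true, dite_false] at h
      exacts [h, h, D.2.adj h]
    · by_cases ha : a ∈ U <;> by_cases hb : b ∈ U <;> simp only [ha, hb, dite_true, dite_false]
      · exact absurd hb (hU' ha h)
      · simpa using h
      · simpa using h.symm
      · exact D.2.iff_not (v := ⟨a, ha⟩) (w := ⟨b, hb⟩) h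
    · obtain ⟨f, hf⟩ := exists_rank_of_acyclic D.2.acyclic
      refine acyclic_of_rank (fun v => if hv : v ∈ U then 0 else f ⟨v, hv⟩ + 1) fun a b h => ?_
      by_cases ha : a ∈ U <;> by_cases hb : b ∈ U <;>
        simp only [ha, hb, dite_true, dite_false] at h ⊢
      · exact absurd hb (hU' ha h)
      · omega
      · exact Nat.succ_lt_succ (hf h)
    · by_cases hw : w ∈ U <;> simp only [hw, hu, dite_true, dite_false, not_false_eq_true]
      exact fun h => hU' hw h hu⟩
  left_inv D := by
    obtain ⟨D, hD, hsrc⟩ := D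
    refine Subtype.ext (funext₂ fun a b => propext ?_)
    by_cases ha : a ∈ U <;> by_cases hb : b ∈ U <;> simp only [ha, hb, dite_true, dite_false]
    · exact ⟨fun h => (hU ha hb h.ne h).elim, fun h => (hU ha hb (hD.adj h).ne (hD.adj h)).elim⟩
    · exact ⟨fun h => (hD.iff_not h).2 (hsrc a ha b), fun h => hD.adj h⟩
    · exact ⟨False.elim, fun h => hsrc b hb a h⟩
  right_inv D := by
    refine Subtype.ext (funext₂ fun a b => ?_)
    have ha : (a : V) ∉ U := a.2
    have hb : (b : V) ∉ U := b.2
    simp [ha, hb]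

theorem sum_neg_one_pow_mul_card_sources_eq_zero [Fintype V] [Nonempty V] (H : SimpleGraph V) :
    ∑ U ∈ indepSets H, (-1 : ℤ) ^ #U *
      Nat.card {D // IsAcyclicOrientation H D ∧ ∀ u ∈ U, ∀ w, ¬ D w u} = 0 := by
  classical
  have hsubsets (D : V → V → Prop) (hD : IsAcyclicOrientation H D) :
      (indepSets H).filter (fun U => ∀ u ∈ U, ∀ w, ¬ D w u) =
        (univ.filter fun v => ∀ w, ¬ D w v).powerset := by
    ext U
    simp only [mem_filter, mem_powerset, mem_indepSets, subset_iff, mem_univ, true_and]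
    exact ⟨And.right, fun h => ⟨hD.isIndepSet_sources.mono fun u hu => h u hu, h⟩⟩
  have hnonempty (D : V → V → Prop) (hD : IsAcyclicOrientation H D) :
      (univ.filter fun v => ∀ w, ¬ D w v).Nonempty := by
    obtain ⟨v, hv⟩ := exists_source hD.acyclic
    exact ⟨v, mem_filter.2 ⟨mem_univ v, hv⟩⟩
  simp only [Nat.card_eq_fintype_card, Fintype.card_subtype, card_filter, Nat.cast_sum, mul_sum]
  rw [sum_comm]
  refine sum_eq_zero fun D _ => ?_
  by_cases hD : IsAcyclicOrientation H D
  · simp only [hD, true_and, Nat.cast_ite, Nat.cast_one, Nat.cast_zero, mul_ite, mul_one, mul_zero,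
      ← sum_filter, hsubsets D hD]
    exact sum_powerset_neg_one_pow_card_of_nonempty (hnonempty D hD)
  · simp [hD]

theorem card_acyclicOrientations_eq_sum [Fintype V] [DecidableEq V] [Nonempty V]
    (H : SimpleGraph V) : (Nat.card {D // IsAcyclicOrientation H D} : ℤ) =
      -∑ U ∈ (indepSets H).erase ∅,
        (-1) ^ #U * (Nat.card {D // IsAcyclicOrientation (H.induce (↑U)ᶜ) D} : ℤ) := by
  have h := sum_neg_one_pow_mul_card_sources_eq_zero H
  rw [← add_sum_erase _ _ (show ∅ ∈ indepSets H from mem_indepSets.2 (by simp))] at h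
  simp only [card_empty, pow_zero, one_mul, notMem_empty, IsEmpty.forall_iff, implies_true,
    and_true] at h
  rw [eq_neg_of_add_eq_zero_left h]
  refine congrArg _ (sum_congr rfl fun U hU => ?_)
  have e := sourcesEquiv H (U := ↑U) (mem_indepSets.1 (mem_of_mem_erase hU))
  rw [← Nat.card_congr e]
  rfl

lemma card_acyclicOrientations_of_isEmpty [IsEmpty V] (H : SimpleGraph V) :
    Nat.card {D // IsAcyclicOrientation H D} = 1 :=
  Nat.card_eq_one_iff_unique.2 ⟨inferInstance,
    ⟨⟨fun _ _ => False, isEmptyElim, isEmptyElim, isEmptyElim⟩⟩⟩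

theorem neg_one_pow_card_mul_eval_neg_one [Fintype V] (H : SimpleGraph V) :
    (-1 : ℤ) ^ Fintype.card V * (chromaticPoly H).eval (-1) =
      Nat.card {D // IsAcyclicOrientation H D} := by
  induction hn : Fintype.card V using Nat.strong_induction_on generalizing V with
  | _ n ih =>
  classical
  cases isEmpty_or_nonempty V
  · rw [← hn, Fintype.card_eq_zero, chromaticPoly_of_isEmpty, card_acyclicOrientations_of_isEmpty]
    simp
  rw [← hn, neg_one_pow_card_mul_eval_neg_one_eq_sum, card_acyclicOrientations_eq_sum]
  refine congrArg _ (sum_congr rfl fun U hU => ?_)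
  have hcard : Fintype.card ↥(↑U : Set V)ᶜ < n := by
    rw [card_compl_coe, ← hn]
    exact Nat.sub_lt Fintype.card_pos (card_pos.2 (nonempty_iff_ne_empty.2 (ne_of_mem_erase hU)))
  rw [ih _ hcard _ rfl]

/-- Edges between different color classes must point to the larger color, so a compatible
acyclic orientation is determined by its restriction to the monochromatic edges. -/
noncomputable def compatibleOrientationsEquiv [Finite V] {β : Type*} [LinearOrder β]
    (G : SimpleGraph V) (x : V → β) :
    {D // IsAcyclicOrientation G D ∧ ∀ v w, D v w → x v ≤ x w} ≃
      {D // IsAcyclicOrientation (monochromaticSubgraph G x) D} where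
  toFun D := ⟨fun a b => D.1 a b ∧ x a = x b,
    ⟨fun _ _ h => ⟨D.2.1.adj h.1, h.2⟩,
      fun _ _ h => by simp only [D.2.1.iff_not h.1, h.2, and_true],
      fun v hv => D.2.1.acyclic v (TransGen.mono (fun _ _ h => h.1) v v hv)⟩⟩
  invFun D := ⟨fun a b => D.1 a b ∨ G.Adj a b ∧ x a < x b, by
    have hD := D.2
    have hx : ∀ ⦃a b⦄, D.1 a b → x a = x b := fun a b h => (hD.adj h).2
    refine ⟨⟨fun a b h => h.elim (fun h => (hD.adj h).1) And.left, fun a b h => ?_, ?_⟩,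
      fun a b h => h.elim (fun h => (hx h).le) fun h => h.2.le⟩
    · rcases lt_trichotomy (x a) (x b) with hab | hab | hab
      · refine iff_of_true (Or.inr ⟨h, hab⟩) ?_
        rintro (h' | h')
        exacts [hab.ne' (hx h'), lt_asymm hab h'.2]
      · simp only [hab, lt_irrefl, and_false, or_false]
        exact hD.iff_not ⟨h, hab⟩
      · refine iff_of_false ?_ (not_not.2 (Or.inr ⟨h.symm, hab⟩))
        rintro (h' | h')
        exacts [hab.ne' (hx h'), lt_asymm hab h'.2]
    · obtain ⟨f, hf⟩ := exists_rank_of_acyclic hD.acyclic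
      refine acyclic_of_rank (fun v => toLex (x v, f v)) fun a b h => ?_
      rw [Prod.Lex.toLex_lt_toLex]
      exact h.elim (fun h => Or.inr ⟨hx h, hf h⟩) fun h => Or.inl h.2⟩
  left_inv D := by
    obtain ⟨D, hD, hx⟩ := D
    refine Subtype.ext (funext₂ fun a b => propext ⟨?_, fun h => ?_⟩)
    · rintro (h | ⟨hab, hlt⟩)
      exacts [h.1, (hD.iff_not hab).2 fun h => (hx b a h).not_gt hlt]
    · exact (hx a b h).eq_or_lt.imp (⟨h, ·⟩) (⟨hD.adj h, ·⟩)
  right_inv D := by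
    refine Subtype.ext (funext₂ fun a b => propext ⟨?_, fun h => ⟨Or.inl h, (D.2.adj h).2⟩⟩)
    rintro ⟨h | h, hab⟩
    exacts [h, absurd hab h.2.ne]

theorem card_compatible_eq_sum [Fintype V] [DecidableEq V] {β : Type*} [Fintype β]
    [LinearOrder β] (G : SimpleGraph V) :
    Nat.card {xD : (V → β) × (V → V → Prop) //
        IsAcyclicOrientation G xD.2 ∧ ∀ v w, xD.2 v w → xD.1 v ≤ xD.1 w} =
      ∑ x : V → β, Nat.card {D // IsAcyclicOrientation (monochromaticSubgraph G x) D} := by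
  rw [Nat.card_congr (Equiv.subtypeProdEquivSigmaSubtype fun (x : V → β) D =>
    IsAcyclicOrientation G D ∧ ∀ v w, D v w → x v ≤ x w), Nat.card_sigma]
  exact sum_congr rfl fun x _ => Nat.card_congr (compatibleOrientationsEquiv G x)

theorem neg_one_pow_card_mul_eval_neg_card [Fintype V] {β : Type*} [Fintype β]
    [LinearOrder β] (G : SimpleGraph V) :
    (-1 : ℤ) ^ Fintype.card V * (chromaticPoly G).eval (-(Fintype.card β : ℤ)) =
      Nat.card {xD : (V → β) × (V → V → Prop) //
        IsAcyclicOrientation G xD.2 ∧ ∀ v w, xD.2 v w → xD.1 v ≤ xD.1 w} := by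
  classical
  rw [neg_eq_neg_one_mul (Fintype.card β : ℤ), eval_chromaticPoly_mul_card, mul_sum,
    card_compatible_eq_sum, Nat.cast_sum]
  exact sum_congr rfl fun x _ => neg_one_pow_card_mul_eval_neg_one _

end ChromaticReciprocity

open ChromaticReciprocity

/-- Stanley's reciprocity theorem for the chromatic polynomial: up to the sign `(-1)^|V|`,
the chromatic polynomial evaluated at `-k` counts pairs of a (not necessarily proper)
`k`-coloring `x` together with a compatible acyclic orientation `D` of the graph.

An orientation is encoded as a relation `D` supported on the edges of `G` that chooses
exactly one direction for each edge; acyclicity is irreflexivity of its transitive closure;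
compatibility means colors weakly increase along directed edges. -/
theorem stanley_chromatic_reciprocity
    (V : Type*) [Fintype V] (G : SimpleGraph V) (χ : Polynomial ℤ)
    (hχ : ∀ k : ℕ, 0 < k →
      χ.eval (k : ℤ) =
        (Set.ncard {x : V → Fin k | ∀ v w, G.Adj v w → x v ≠ x w} : ℤ)) :
    ∀ k : ℕ, 0 < k →
      (-1 : ℤ) ^ (Fintype.card V) * χ.eval (-(k : ℤ)) =
        (Set.ncard {xD : (V → Fin k) × (V → V → Prop) |
          (∀ v w, xD.2 v w → G.Adj v w) ∧
          (∀ v w, G.Adj v w → (xD.2 v w ↔ ¬ xD.2 w v)) ∧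
          (∀ v, ¬ Relation.TransGen xD.2 v v) ∧
          (∀ v w, xD.2 v w → xD.1 v ≤ xD.1 w)} : ℤ) := by
  intro k _
  have hχG : χ = chromaticPoly G := eq_of_eval_natCast_eq fun m hm => by
    rw [hχ m hm, eval_chromaticPoly_natCast]
    rfl
  have h := neg_one_pow_card_mul_eval_neg_card G (β := Fin k)
  rw [Fintype.card_fin] at h
  rw [hχG, h]
  exact congrArg Nat.cast <| Nat.card_congr <| Equiv.subtypeEquivRight fun _ =>
    ⟨fun ⟨⟨h₁, h₂, h₃⟩, h₄⟩ => ⟨h₁, h₂, h₃, h₄⟩, fun ⟨h₁, h₂, h₃, h₄⟩ => ⟨⟨h₁, h₂, h₃⟩, h₄⟩⟩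
end

section
/- Let G be a finite directed multigraph, given by a finite vertex set V, a finite edge set E, and maps tail, head : E → V. Then there exists a polynomial φ_G with rational coefficients such that for every positive integer k, φ_G(k) equals the number of nowhere-zero ℤ_k-flows on G, i.e., the number of functions y : E → ℤ/kℤ with y(e) ≠ 0 for all e ∈ E and, for every vertex v, Σ_{e : head(e)=v} y(e) = Σ_{e : tail(e)=v} y(e) in ℤ/kℤ. -/
open Finset
namespace ModFlowAux
set_option linter.unusedSectionVars false
variable {V : Type*} [Fintype V] [DecidableEq V]

def D (k : ℕ) {E : Type*} [Fintype E] (tail head : E → V) (y : E → ZMod k) (v : V) : ZMod k :=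
  ∑ e, ((if head e = v then y e else 0) - (if tail e = v then y e else 0))

def Cons (k : ℕ) {E : Type*} [Fintype E] (tail head : E → V) (y : E → ZMod k) : Prop :=
  ∀ v : V, ∑ e ∈ Finset.univ.filter (fun e => head e = v), y e =
      ∑ e ∈ Finset.univ.filter (fun e => tail e = v), y e

lemma cons_iff (k : ℕ) {E : Type*} [Fintype E] (tail head : E → V) (y : E → ZMod k) :
    Cons k tail head y ↔ ∀ v, D k tail head y v = 0 := by
  unfold Cons D
  refine forall_congr' fun v => ?_
  rw [Finset.sum_sub_distrib, sub_eq_zero, ← Finset.sum_filter, ← Finset.sum_filter]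

lemma sum_split {E : Type*} [Fintype E] [DecidableEq E] {M : Type*} [AddCommMonoid M]
    (e0 : E) (g : E → M) :
    ∑ e, g e = g e0 + ∑ e : {e : E // e ≠ e0}, g e.val := by
  rw [← Finset.add_sum_erase _ g (mem_univ e0)]
  congr 1
  exact Finset.sum_subtype (univ.erase e0) (fun x => by simp) g

lemma D_split (k : ℕ) {E : Type*} [Fintype E] [DecidableEq E] (tail head : E → V) (e0 : E)
    (y : E → ZMod k) (v : V) :
    D k tail head y v = ((if head e0 = v then y e0 else 0) - (if tail e0 = v then y e0 else 0))
      + D k (fun e : {e : E // e ≠ e0} => tail e.val) (fun e => head e.val)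
          (fun e => y e.val) v := by
  simp only [D]
  exact sum_split e0 _

lemma D_comp (k : ℕ) {E : Type*} [Fintype E] (tail head : E → V) (f : V → V) (y : E → ZMod k)
    (v : V) :
    D k (fun e => f (tail e)) (fun e => f (head e)) y v
      = ∑ w ∈ Finset.univ.filter (fun w => f w = v), D k tail head y w := by
  unfold D
  rw [Finset.sum_comm]
  refine Finset.sum_congr rfl fun e _ => ?_
  rw [Finset.sum_sub_distrib, Finset.sum_ite_eq, Finset.sum_ite_eq]
  simp [Finset.mem_filter]

section Contract
variable {k : ℕ} {E : Type*} [Fintype E] [DecidableEq E] (tail head : E → V) (e0 : E)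

lemma cons_contract (hab : tail e0 ≠ head e0) (y : E → ZMod k) :
    Cons k tail head y ↔
      (Cons k
          (fun e : {e : E // e ≠ e0} =>
            if tail e.val = head e0 then tail e0 else tail e.val)
          (fun e : {e : E // e ≠ e0} =>
            if head e.val = head e0 then tail e0 else head e.val)
          (fun e => y e.val)
        ∧ y e0 = - D k (fun e : {e : E // e ≠ e0} => tail e.val) (fun e => head e.val)
            (fun e => y e.val) (head e0)) := by
  set a := tail e0 with ha
  set b := head e0 with hb
  set c : V → ZMod k := D k (fun e : {e : E // e ≠ e0} => tail e.val) (fun e => head e.val)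
      (fun e => y e.val) with hc
  have hfa : Finset.univ.filter (fun w => (if w = b then a else w) = a) = {a, b} := by
    ext w
    by_cases hw : w = b <;> simp [hw]
  have hfb : Finset.univ.filter (fun w => (if w = b then a else w) = b) = ∅ := by
    ext w
    by_cases hw : w = b <;> simp [hw, hab]
  have hfv : ∀ v, v ≠ a → v ≠ b →
      Finset.univ.filter (fun w => (if w = b then a else w) = v) = {v} := by
    intro v hva hvb
    ext w
    by_cases hw : w = b <;> simp [hw, Ne.symm hva, Ne.symm hvb]
  have key : ∀ v, D k tail head y v
      = ((if b = v then y e0 else 0) - (if a = v then y e0 else 0)) + c v := by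
    intro v
    rw [D_split k tail head e0 y v, ← ha, ← hb, ← hc]
  have hDc : ∀ v,
      D k (fun e : {e : E // e ≠ e0} => if tail e.val = b then a else tail e.val)
          (fun e => if head e.val = b then a else head e.val) (fun e => y e.val) v
        = ∑ w ∈ Finset.univ.filter (fun w => (if w = b then a else w) = v), c w := by
    intro v
    have h := D_comp k (fun e : {e : E // e ≠ e0} => tail e.val) (fun e => head e.val)
      (fun v => if v = b then a else v) (fun e => y e.val) v
    simpa [← hc] using h
  constructor
  · intro hy
    have hD := (cons_iff k tail head y).mp hy
    have h2 : ∀ v, ((if b = v then y e0 else 0) - (if a = v then y e0 else 0)) + c v = 0 := by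
      intro v; rw [← key v]; exact hD v
    have hca : c a = y e0 := by
      have h3 := h2 a
      simp [Ne.symm hab] at h3
      linear_combination h3
    have hcb : c b = - y e0 := by
      have h3 := h2 b
      simp [hab] at h3
      linear_combination h3
    refine ⟨?_, ?_⟩
    · rw [cons_iff]
      intro v
      rw [hDc v]
      by_cases hva : v = a
      · rw [hva, hfa, Finset.sum_pair hab, hca, hcb]
        ring
      · by_cases hvb : v = b
        · rw [hvb, hfb, Finset.sum_empty]
        · rw [hfv v hva hvb, Finset.sum_singleton]
          have h3 := h2 v
          simpa [Ne.symm hva, Ne.symm hvb] using h3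
    · rw [hcb]
      ring
  · rintro ⟨hcons, hx⟩
    have h3 : ∀ v, ∑ w ∈ Finset.univ.filter (fun w => (if w = b then a else w) = v), c w = 0 := by
      intro v
      rw [← hDc v]
      exact (cons_iff _ _ _ _).mp hcons v
    have hsum : c a + c b = 0 := by
      have h4 := h3 a
      rwa [hfa, Finset.sum_pair hab] at h4
    have hcv : ∀ v, v ≠ a → v ≠ b → c v = 0 := by
      intro v hva hvb
      have h4 := h3 v
      rwa [hfv v hva hvb, Finset.sum_singleton] at h4
    rw [cons_iff]
    intro v
    rw [key v]
    by_cases hva : v = a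
    · have hif1 : (if b = a then y e0 else 0) = 0 := if_neg (Ne.symm hab)
      have hif2 : (if a = a then y e0 else 0) = y e0 := if_pos rfl
      rw [hva, hif1, hif2]
      linear_combination hsum - hx
    · by_cases hvb : v = b
      · have hif1 : (if b = b then y e0 else 0) = y e0 := if_pos rfl
        have hif2 : (if a = b then y e0 else 0) = 0 := if_neg hab
        rw [hvb, hif1, hif2]
        linear_combination hx
      · simp only [if_neg (Ne.symm hva), if_neg (Ne.symm hvb)]
        rw [hcv v hva hvb]
        ring

/-- Loop case: conservation ignores a loop edge. -/
lemma cons_loop (h : tail e0 = head e0) (y : E → ZMod k) :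
    Cons k tail head y ↔
      Cons k (fun e : {e : E // e ≠ e0} => tail e.val) (fun e => head e.val)
        (fun e => y e.val) := by
  simp only [cons_iff]
  refine forall_congr' fun v => ?_
  rw [D_split k tail head e0 y v, h, sub_self, zero_add]

/-- Delete case: if the value at `e0` is zero, conservation passes to the deleted graph. -/
lemma cons_delete (y : E → ZMod k) (h0 : y e0 = 0) :
    Cons k tail head y ↔
      Cons k (fun e : {e : E // e ≠ e0} => tail e.val) (fun e => head e.val)
        (fun e => y e.val) := by
  simp only [cons_iff]
  refine forall_congr' fun v => ?_
  rw [D_split k tail head e0 y v, h0]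
  simp

end Contract

/-- The set of nowhere-zero flows. -/
def NZF (k : ℕ) {E : Type*} [Fintype E] (tail head : E → V) : Set (E → ZMod k) :=
  {y | (∀ e, y e ≠ 0) ∧ Cons k tail head y}

section Ext

variable {k : ℕ} {E : Type*} [DecidableEq E] {e0 : E}

/-- Extend a function on `{e // e ≠ e0}` by a value at `e0`. -/
def ext (e0 : E) (x : ZMod k) (y' : {e : E // e ≠ e0} → ZMod k) : E → ZMod k :=
  fun e => if h : e = e0 then x else y' ⟨e, h⟩

@[simp] lemma ext_e0 (x : ZMod k) (y') : ext e0 x y' e0 = x := by simp [ext]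

@[simp] lemma ext_ne (x : ZMod k) (y') (e : {e : E // e ≠ e0}) :
    ext e0 x y' e.val = y' e := by
  simp [ext, e.prop]

@[simp] lemma ext_comp (x : ZMod k) (y') :
    (fun e : {e : E // e ≠ e0} => ext e0 x y' e.val) = y' := by
  funext e; simp

lemma ext_eq_self (y : E → ZMod k) : ext e0 (y e0) (fun e => y e.val) = y := by
  funext e
  by_cases h : e = e0 <;> simp [ext, h]

end Ext

section Count

variable (k : ℕ) {E : Type*} [Fintype E] [DecidableEq E]
  (tail head : E → V) (e0 : E)

/-- Counting in the loop case. -/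
lemma card_loop (hk : 0 < k) (h : tail e0 = head e0) :
    Nat.card (NZF k tail head) =
      (k - 1) * Nat.card (NZF k (fun e : {e : E // e ≠ e0} => tail e.val)
        (fun e => head e.val)) := by
  haveI : NeZero k := ⟨hk.ne'⟩
  have eqv : (NZF k tail head) ≃
      {x : ZMod k // x ≠ 0} ×
        (NZF k (fun e : {e : E // e ≠ e0} => tail e.val) (fun e => head e.val)) :=
    { toFun := fun y => ⟨⟨y.1 e0, y.2.1 e0⟩,
        ⟨fun e => y.1 e.val, fun e => y.2.1 e.val,
          (cons_loop tail head e0 h y.1).mp y.2.2⟩⟩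
      invFun := fun p => ⟨ext e0 p.1.val p.2.1,
        by
          refine ⟨fun e => ?_, ?_⟩
          · by_cases he : e = e0
            · subst he; simpa using p.1.prop
            · simpa [ext, he] using p.2.2.1 ⟨e, he⟩
          · rw [cons_loop tail head e0 h]
            simpa using p.2.2.2⟩
      left_inv := fun y => Subtype.ext (ext_eq_self y.1)
      right_inv := fun p => by
        refine Prod.ext (Subtype.ext ?_) (Subtype.ext ?_) <;> simp }
  rw [Nat.card_congr eqv, Nat.card_prod]
  congr 1
  rw [Nat.card_eq_fintype_card]
  have : Fintype.card {x : ZMod k // ¬ x = 0} =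
      Fintype.card (ZMod k) - Fintype.card {x : ZMod k // x = 0} :=
    Fintype.card_subtype_compl _
  rw [this, Fintype.card_subtype_eq, ZMod.card]

/-- Counting in the non-loop case: deletion–contraction. -/
lemma card_nonloop (hk : 0 < k) (hab : tail e0 ≠ head e0) :
    Nat.card (NZF k
        (fun e : {e : E // e ≠ e0} => if tail e.val = head e0 then tail e0 else tail e.val)
        (fun e : {e : E // e ≠ e0} => if head e.val = head e0 then tail e0 else head e.val))
      = Nat.card (NZF k tail head)
        + Nat.card (NZF k (fun e : {e : E // e ≠ e0} => tail e.val) (fun e => head e.val)) := by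
  haveI : NeZero k := ⟨hk.ne'⟩
  have e1 : {y : E → ZMod k // (∀ e, e ≠ e0 → y e ≠ 0) ∧ Cons k tail head y} ≃
      (NZF k
        (fun e : {e : E // e ≠ e0} => if tail e.val = head e0 then tail e0 else tail e.val)
        (fun e : {e : E // e ≠ e0} => if head e.val = head e0 then tail e0 else head e.val)) :=
    { toFun := fun y => ⟨fun e => y.1 e.val,
        ⟨fun e => y.2.1 e.val e.prop,
          ((cons_contract tail head e0 hab y.1).mp y.2.2).1⟩⟩
      invFun := fun y' =>
        ⟨ext e0 (- D k (fun e : {e : E // e ≠ e0} => tail e.val) (fun e => head e.val)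
            y'.1 (head e0)) y'.1,
          by
            refine ⟨fun e he => ?_, ?_⟩
            · simpa [ext, he] using y'.2.1 ⟨e, he⟩
            · rw [cons_contract tail head e0 hab]
              constructor
              · simpa using y'.2.2
              · simp⟩
      left_inv := fun y => by
        have hval := ((cons_contract tail head e0 hab y.1).mp y.2.2).2
        refine Subtype.ext (funext fun e => ?_)
        dsimp only
        by_cases he : e = e0
        · subst he
          rw [ext_e0, ← hval]
        · exact ext_ne _ _ ⟨e, he⟩
      right_inv := fun y' => Subtype.ext (by simp) }
  have e2 : {y : E → ZMod k // (∀ e, e ≠ e0 → y e ≠ 0) ∧ Cons k tail head y} ≃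
      (NZF k tail head) ⊕
        (NZF k (fun e : {e : E // e ≠ e0} => tail e.val) (fun e => head e.val)) :=
    { toFun := fun y =>
        if h : y.1 e0 = 0 then
          Sum.inr ⟨fun e => y.1 e.val,
            ⟨fun e => y.2.1 e.val e.prop, (cons_delete tail head e0 y.1 h).mp y.2.2⟩⟩
        else
          Sum.inl ⟨y.1, ⟨fun e => if he : e = e0 then he ▸ h else y.2.1 e he, y.2.2⟩⟩
      invFun := fun s =>
        match s with
        | Sum.inl y => ⟨y.1, ⟨fun e _ => y.2.1 e, y.2.2⟩⟩
        | Sum.inr y' =>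
            ⟨ext e0 0 y'.1,
              ⟨fun e he => by simpa [ext, he] using y'.2.1 ⟨e, he⟩,
                by
                  rw [cons_delete tail head e0 _ (ext_e0 0 y'.1)]
                  simpa using y'.2.2⟩⟩
      left_inv := fun y => by
        by_cases h : y.1 e0 = 0
        · simp only [dif_pos h]
          refine Subtype.ext (funext fun e => ?_)
          dsimp only
          by_cases he : e = e0
          · subst he; rw [ext_e0, h]
          · exact ext_ne _ _ ⟨e, he⟩
        · simp only [dif_neg h]
      right_inv := fun s => by
        match s with
        | Sum.inl y =>
            have h : y.1 e0 ≠ 0 := y.2.1 e0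
            simp only [dif_neg h]
        | Sum.inr y' =>
            have h : ext e0 0 y'.1 e0 = 0 := ext_e0 0 y'.1
            simp only [dif_pos h]
            congr 1
            exact Subtype.ext (by simp) }
  rw [← Nat.card_congr e1, Nat.card_congr e2, Nat.card_sum]

/-- Counting for an empty edge set. -/
lemma card_empty (hk : 0 < k) {E : Type*} [Fintype E] [IsEmpty E] (tail head : E → V) :
    Nat.card (NZF k tail head) = 1 := by
  haveI : NeZero k := ⟨hk.ne'⟩
  have h : NZF k tail head = Set.univ := by
    refine Set.eq_univ_of_forall fun y => ⟨fun e => isEmptyElim e, fun v => by simp⟩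
  rw [h]
  exact (Nat.card_congr (Equiv.Set.univ _)).trans Nat.card_unique

end Count

/-- Main induction: deletion–contraction. -/
lemma main : ∀ (n : ℕ) (E : Type u) [Fintype E] [DecidableEq E],
    Fintype.card E = n → ∀ (tail head : E → V),
      ∃ φ : Polynomial ℚ, ∀ k : ℕ, 0 < k →
        φ.eval (k : ℚ) = (Nat.card (NZF k tail head) : ℚ) := by
  intro n
  induction n with
  | zero =>
      intro E _ _ hE tail head
      refine ⟨1, fun k hk => ?_⟩
      haveI : IsEmpty E := Fintype.card_eq_zero_iff.mp hE
      rw [card_empty k hk]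
      simp
  | succ n ih =>
      intro E _ _ hE tail head
      have hne : Nonempty E := Fintype.card_pos_iff.mp (by omega)
      obtain ⟨e0⟩ := hne
      have hcard : Fintype.card {e : E // e ≠ e0} = n := by
        have h1 : Fintype.card {e : E // ¬ e = e0} =
            Fintype.card E - Fintype.card {e : E // e = e0} :=
          Fintype.card_subtype_compl _
        rw [h1, hE, Fintype.card_subtype_eq]
        omega
      by_cases hl : tail e0 = head e0
      · obtain ⟨φ', hφ'⟩ := ih {e : E // e ≠ e0} hcard
          (fun e => tail e.val) (fun e => head e.val)
        refine ⟨(Polynomial.X - 1) * φ', fun k hk => ?_⟩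
        rw [card_loop k tail head e0 hk hl]
        rw [Polynomial.eval_mul, Polynomial.eval_sub, Polynomial.eval_X,
          Polynomial.eval_one, hφ' k hk]
        rw [Nat.cast_mul, Nat.cast_sub hk, Nat.cast_one]
      · obtain ⟨φc, hφc⟩ := ih {e : E // e ≠ e0} hcard
          (fun e : {e : E // e ≠ e0} => if tail e.val = head e0 then tail e0 else tail e.val)
          (fun e : {e : E // e ≠ e0} => if head e.val = head e0 then tail e0 else head e.val)
        obtain ⟨φd, hφd⟩ := ih {e : E // e ≠ e0} hcard
          (fun e => tail e.val) (fun e => head e.val)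
        refine ⟨φc - φd, fun k hk => ?_⟩
        have hcc := card_nonloop k tail head e0 hk hl
        rw [Polynomial.eval_sub, hφc k hk, hφd k hk]
        have : (Nat.card (NZF k
            (fun e : {e : E // e ≠ e0} => if tail e.val = head e0 then tail e0 else tail e.val)
            (fun e : {e : E // e ≠ e0} => if head e.val = head e0 then tail e0 else head e.val))
            : ℚ)
            = (Nat.card (NZF k tail head) : ℚ)
              + (Nat.card (NZF k (fun e : {e : E // e ≠ e0} => tail e.val)
                  (fun e => head e.val)) : ℚ) := by
          rw [hcc]; push_cast; ring
        linarith [this]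

end ModFlowAux

/-- The modular flow polynomial: for any finite directed multigraph there is a polynomial
whose value at each positive integer `k` is the number of nowhere-zero `ℤ/kℤ`-flows. -/
theorem modular_flow_polynomial_exists
    (V E : Type*) [Fintype V] [Fintype E] [DecidableEq V]
    (tail head : E → V) :
    ∃ φ : Polynomial ℚ,
      ∀ k : ℕ, 0 < k →
        φ.eval (k : ℚ) =
          (Set.ncard {y : E → ZMod k |
            (∀ e, y e ≠ 0) ∧
            ∀ v : V,
              ∑ e ∈ Finset.univ.filter (fun e => head e = v), y e =
                ∑ e ∈ Finset.univ.filter (fun e => tail e = v), y e} : ℚ) := by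
  classical
  obtain ⟨φ, hφ⟩ := ModFlowAux.main (Fintype.card E) E rfl tail head
  refine ⟨φ, fun k hk => ?_⟩
  rw [hφ k hk]
  congr 1
end

section
/- Let v_1, …, v_d ∈ ℤ^n be linearly independent. Then ℤ^n ∩ cone_ℝ(v_1,…,v_d) = (ℤ^n ∩ Π(v_1,…,v_d)) + cone_ℤ(v_1,…,v_d); moreover this decomposition is a partition: the translates w + cone_ℤ(v_1,…,v_d), as w ranges over ℤ^n ∩ Π(v_1,…,v_d), are pairwise disjoint. -/
open scoped Pointwise

/-- The real coordinate vector of an integer vector. -/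
def toReal {n : ℕ} (x : Fin n → ℤ) : Fin n → ℝ := fun j => (x j : ℝ)

/-- The set of integer points of `ℝ^n`. -/
def intPts (n : ℕ) : Set (Fin n → ℝ) := Set.range (toReal (n := n))

/-- The real cone generated by the vectors `v i`: all combinations with nonnegative real
coefficients. -/
def coneR {n d : ℕ} (v : Fin d → (Fin n → ℤ)) : Set (Fin n → ℝ) :=
  {y | ∃ lam : Fin d → ℝ, (∀ i, 0 ≤ lam i) ∧ y = ∑ i, lam i • toReal (v i)}

/-- The discrete cone generated by the vectors `v i`: all combinations with nonnegative
integer coefficients. -/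
def coneZ {n d : ℕ} (v : Fin d → (Fin n → ℤ)) : Set (Fin n → ℝ) :=
  {y | ∃ c : Fin d → ℕ, y = ∑ i, (c i : ℝ) • toReal (v i)}

/-- The (half-open) fundamental parallelepiped of the vectors `v i`. -/
def fundPar {n d : ℕ} (v : Fin d → (Fin n → ℤ)) : Set (Fin n → ℝ) :=
  {y | ∃ lam : Fin d → ℝ, (∀ i, 0 ≤ lam i ∧ lam i < 1) ∧ y = ∑ i, lam i • toReal (v i)}

/-!
Splitting each real coefficient of a lattice point of the cone into its floor and its fractional
part writes the point as a lattice point of the parallelepiped plus a point of the discrete cone.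
By linear independence the coefficients are unique, and the parallelepiped coefficients are
recovered from them as fractional parts, so the parallelepiped point is unique as well.
-/

variable {n d : ℕ}

lemma intPts_eq_coe_range (n : ℕ) :
    intPts n = ((Int.castAddHom ℝ).compLeft (Fin n)).range := rfl

lemma add_mem_intPts {x y : Fin n → ℝ} (hx : x ∈ intPts n) (hy : y ∈ intPts n) :
    x + y ∈ intPts n := by
  rw [intPts_eq_coe_range] at *
  exact AddSubgroup.add_mem _ hx hy

lemma sub_mem_intPts {x y : Fin n → ℝ} (hx : x ∈ intPts n) (hy : y ∈ intPts n) :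
    x - y ∈ intPts n := by
  rw [intPts_eq_coe_range] at *
  exact AddSubgroup.sub_mem _ hx hy

lemma sum_intCast_smul_mem_intPts (v : Fin d → (Fin n → ℤ)) (k : Fin d → ℤ) :
    ∑ i, (k i : ℝ) • toReal (v i) ∈ intPts n := by
  rw [intPts_eq_coe_range]
  refine AddSubgroup.sum_mem _ fun i _ => ?_
  rw [Int.cast_smul_eq_zsmul]
  exact AddSubgroup.zsmul_mem _ (AddMonoidHom.mem_range.mpr ⟨v i, rfl⟩) _

lemma coneZ_subset_intPts (v : Fin d → (Fin n → ℤ)) : coneZ v ⊆ intPts n := by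
  rintro _ ⟨c, rfl⟩
  exact_mod_cast sum_intCast_smul_mem_intPts v fun i => (c i : ℤ)

lemma fundPar_add_coneZ_subset_coneR (v : Fin d → (Fin n → ℤ)) :
    fundPar v + coneZ v ⊆ coneR v := by
  rintro _ ⟨_, ⟨mu, hmu, rfl⟩, _, ⟨c, rfl⟩, rfl⟩
  refine ⟨fun i => mu i + c i, fun i => add_nonneg (hmu i).1 (c i).cast_nonneg, ?_⟩
  simp only [add_smul, Finset.sum_add_distrib]

lemma inter_intPts_coneR_subset (v : Fin d → (Fin n → ℤ)) :
    intPts n ∩ coneR v ⊆ (intPts n ∩ fundPar v) + coneZ v := by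
  rintro x ⟨hx, lam, hlam, rfl⟩
  have hfloor : ∀ i, ((⌊lam i⌋.toNat : ℕ) : ℝ) = ⌊lam i⌋ := fun i => by
    exact_mod_cast Int.toNat_of_nonneg (Int.floor_nonneg.mpr (hlam i))
  have hsplit : ∑ i, Int.fract (lam i) • toReal (v i)
      = ∑ i, lam i • toReal (v i) - ∑ i, (⌊lam i⌋ : ℝ) • toReal (v i) := by
    simp only [← Finset.sum_sub_distrib, ← sub_smul, Int.fract]
  refine ⟨_, ⟨?_, fun i => Int.fract (lam i),
    fun i => ⟨Int.fract_nonneg _, Int.fract_lt_one _⟩, rfl⟩, _, ⟨fun i => ⌊lam i⌋.toNat, rfl⟩, ?_⟩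
  · rw [hsplit]
    exact sub_mem_intPts hx (sum_intCast_smul_mem_intPts v _)
  · simp only [hfloor, ← Finset.sum_add_distrib, ← add_smul, Int.fract_add_floor]

lemma fract_add_natCast_of_mem_Ico {a : ℝ} (ha : a ∈ Set.Ico 0 1) (c : ℕ) :
    Int.fract (a + c) = a := by
  rw [Int.fract_add_natCast, Int.fract_eq_self.mpr ha]

lemma eq_of_add_eq_add_of_mem_fundPar {v : Fin d → (Fin n → ℤ)}
    (hli : LinearIndependent ℝ (fun i => toReal (v i))) {w w' y y' : Fin n → ℝ}
    (hw : w ∈ fundPar v) (hw' : w' ∈ fundPar v) (hy : y ∈ coneZ v) (hy' : y' ∈ coneZ v)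
    (h : w + y = w' + y') : w = w' := by
  obtain ⟨mu, hmu, rfl⟩ := hw
  obtain ⟨mu', hmu', rfl⟩ := hw'
  obtain ⟨c, rfl⟩ := hy
  obtain ⟨c', rfl⟩ := hy'
  simp only [← Finset.sum_add_distrib, ← add_smul] at h
  have hcoeff := Fintype.linearIndependent_iffₛ.mp hli _ _ h
  have hmu_eq : mu = mu' := funext fun i => by
    rw [← fract_add_natCast_of_mem_Ico (hmu i) (c i),
      ← fract_add_natCast_of_mem_Ico (hmu' i) (c' i), hcoeff i]
  rw [hmu_eq]

/-- The fundamental lemma on simplicial cones: the integer points of the real cone generated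
by linearly independent integer vectors are obtained by translating the discrete cone by the
integer points of the fundamental parallelepiped, and these translates are pairwise
disjoint. -/
theorem integer_points_in_simplicial_cone
    (n d : ℕ) (v : Fin d → (Fin n → ℤ))
    (hli : LinearIndependent ℝ (fun i => toReal (v i))) :
    intPts n ∩ coneR v = (intPts n ∩ fundPar v) + coneZ v ∧
      Set.PairwiseDisjoint (intPts n ∩ fundPar v) (fun w => {w} + coneZ v) := by
  refine ⟨(inter_intPts_coneR_subset v).antisymm ?_, ?_⟩
  · rintro _ ⟨w, ⟨hw, hwP⟩, y, hy, rfl⟩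
    exact ⟨add_mem_intPts hw (coneZ_subset_intPts v hy),
      fundPar_add_coneZ_subset_coneR v ⟨w, hwP, y, hy, rfl⟩⟩
  · intro w hw w' hw' hne
    rw [Function.onFun, Set.disjoint_left]
    rintro _ ⟨_, rfl, y, hy, rfl⟩ ⟨_, rfl, y', hy', h⟩
    exact hne (eq_of_add_eq_add_of_mem_fundPar hli hw.2 hw'.2 hy hy' h.symm)
end

section
/- Let X ⊆ ℝ^n be a finite disjoint union of relative interiors of simplices with vertices in ℤ^n, i.e., X = Δ_1° ⊔ … ⊔ Δ_N° where each Δ_j is the convex hull of an affinely independent subset of ℤ^n and Δ_j° is its relative interior, let d be the maximal dimension of the Δ_j, and let p be a polynomial with p(k) = #(ℤ^n ∩ k·X) for all positive integers k. Then the f*-vector of p is nonnegative: writing p(k) = Σ_{i=0}^{d} f*_i · C(k−1, i), every f*_i is a nonnegative integer. -/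
/-!
Fix a simplex with vertices `v₀, …, v_m ∈ ℤⁿ`. A point of `k • Δ°` has unique positive
barycentric weights `λ` of total mass `k`. Writing `λᵢ = μᵢ + cᵢ` with `μᵢ ∈ (0, 1]` and
`cᵢ ∈ ℕ`, a lattice point of `k • Δ°` is, uniquely, a lattice point `∑ μᵢ vᵢ` of the half-open
parallelepiped spanned by the `(vᵢ, 1)`, at some height `r = ∑ μᵢ ∈ [1, m + 1]`, plus
`∑ cᵢ vᵢ` with `∑ cᵢ = k - r`. Hence `#(ℤⁿ ∩ k • Δ°) = ∑ C(k - r + m, m)` over the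
parallelepiped points, and Vandermonde's identity
`C(k - r + m, m) = ∑ᵢ C(k - 1, i) C(m + 1 - r, m - i)` exhibits an `f*`-vector with entries in
`ℕ`. The counts for the disjoint open simplices making up `X` add up.
-/

open Finset Set
open scoped Pointwise

variable {ι E : Type*} [Fintype ι]

def dilatedOpenSimplex [AddCommGroup E] [Module ℝ E] (v : ι → E) (t : ℝ) : Set E :=
  {x | ∃ w : ι → ℝ, (∀ i, 0 < w i) ∧ ∑ i, w i = t ∧ ∑ i, w i • v i = x}

theorem smul_dilatedOpenSimplex [AddCommGroup E] [Module ℝ E] (v : ι → E) {c : ℝ} (hc : 0 < c)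
    (t : ℝ) : c • dilatedOpenSimplex v t = dilatedOpenSimplex v (c * t) := by
  ext x
  rw [mem_smul_set]
  constructor
  · rintro ⟨_, ⟨w, hw, hsum, rfl⟩, rfl⟩
    exact ⟨c • w, fun i => mul_pos hc (hw i), by simp [← Finset.mul_sum, hsum],
      by simp [Finset.smul_sum, smul_smul]⟩
  · rintro ⟨w, hw, hsum, rfl⟩
    refine ⟨_, ⟨c⁻¹ • w, fun i => mul_pos (inv_pos.2 hc) (hw i), ?_, rfl⟩, ?_⟩
    · simp [← Finset.mul_sum, hsum, hc.ne']
    · simp [Finset.smul_sum, smul_smul, hc.ne']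

theorem AffineMap.image_dilatedOpenSimplex_one {F : Type*} [AddCommGroup E] [Module ℝ E]
    [AddCommGroup F] [Module ℝ F] (f : E →ᵃ[ℝ] F) (v : ι → E) :
    f '' dilatedOpenSimplex v 1 = dilatedOpenSimplex (f ∘ v) 1 := by
  have hf : ∀ w : ι → ℝ, ∑ i, w i = 1 → f (∑ i, w i • v i) = ∑ i, w i • f (v i) := by
    intro w hw
    rw [← univ.affineCombination_eq_linear_combination v w hw, univ.map_affineCombination v w hw,
      univ.affineCombination_eq_linear_combination _ w hw]
    rfl
  ext x
  constructor
  · rintro ⟨_, ⟨w, hw, hsum, rfl⟩, rfl⟩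
    exact ⟨w, hw, hsum, (hf w hsum).symm⟩
  · rintro ⟨w, hw, hsum, rfl⟩
    exact ⟨_, ⟨w, hw, hsum, rfl⟩, hf w hsum⟩

theorem AffineBasis.interior_convexHull_eq_dilatedOpenSimplex [NormedAddCommGroup E]
    [NormedSpace ℝ E] (b : AffineBasis ι ℝ E) :
    interior (convexHull ℝ (range b)) = dilatedOpenSimplex b 1 := by
  ext x
  rw [b.interior_convexHull]
  constructor
  · intro hx
    exact ⟨fun i => b.coord i x, hx, b.sum_coord_apply_eq_one x,
      b.linear_combination_coord_eq_self x⟩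
  · rintro ⟨w, hw, hsum, rfl⟩ i
    rw [← univ.affineCombination_eq_linear_combination _ _ hsum,
      b.coord_apply_combination_of_mem (mem_univ i) hsum]
    exact hw i

theorem intrinsicInterior_eq_interior_of_affineSpan_eq_top [NormedAddCommGroup E]
    [NormedSpace ℝ E] {s : Set E}
    (h : affineSpan ℝ s = ⊤) : intrinsicInterior ℝ s = interior s := by
  have hs : (affineSpan ℝ s : Set E) = univ := by rw [h]; rfl
  let e := (Homeomorph.setCongr hs).trans (Homeomorph.Set.univ E)
  rw [intrinsicInterior, show ((↑) : affineSpan ℝ s → E) = e from rfl, ← e.preimage_interior,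
    e.image_preimage]

theorem AffineIndependent.intrinsicInterior_convexHull [NormedAddCommGroup E] [NormedSpace ℝ E]
    {v : ι → E} (hv : AffineIndependent ℝ v) :
    intrinsicInterior ℝ (convexHull ℝ (range v)) = dilatedOpenSimplex v 1 := by
  rcases isEmpty_or_nonempty ι with hι | hι
  · rw [range_eq_empty, convexHull_empty, intrinsicInterior_empty]
    ext; simp [dilatedOpenSimplex]
  obtain ⟨i₀⟩ := id hι
  -- Translating `v i₀` to the origin makes the vertices an affine basis of the vector space
  -- `vectorSpan ℝ (range v)`, where `AffineBasis.interior_convexHull` applies.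
  set D := vectorSpan ℝ (range v)
  let w : ι → D := fun i =>
    ⟨v i -ᵥ v i₀, vsub_mem_vectorSpan ℝ (mem_range_self i) (mem_range_self i₀)⟩
  let φ : D →ᵃⁱ[ℝ] E :=
    (AffineIsometryEquiv.constVAdd ℝ E (v i₀)).toAffineIsometry.comp D.subtypeₗᵢ.toAffineIsometry
  have hφw : φ.toAffineMap ∘ w = v := by funext i; simp [φ, w]
  have hw : AffineIndependent ℝ w := .of_comp φ.toAffineMap (hφw ▸ hv)
  have hspan : affineSpan ℝ (range w) = ⊤ := by
    rw [hw.affineSpan_eq_top_iff_card_eq_finrank_add_one, hv.finrank_vectorSpan_add_one]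
  let b : AffineBasis ι ℝ D := ⟨w, hw, hspan⟩
  have hhull : convexHull ℝ (range v) = φ '' convexHull ℝ (range b) := by
    rw [← φ.coe_toAffineMap, AffineMap.image_convexHull, ← range_comp]
    exact congrArg (convexHull ℝ ∘ range) hφw.symm
  rw [hhull, AffineIsometry.intrinsicInterior_image,
    intrinsicInterior_eq_interior_of_affineSpan_eq_top (by rw [affineSpan_convexHull]; exact hspan),
    b.interior_convexHull_eq_dilatedOpenSimplex, ← φ.coe_toAffineMap,
    AffineMap.image_dilatedOpenSimplex_one]
  exact congrArg (dilatedOpenSimplex · 1) hφw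

theorem norm_sum_smul_le_of_nonneg [SeminormedAddCommGroup E] [NormedSpace ℝ E] {w : ι → ℝ}
    (hw : ∀ i, 0 ≤ w i) (v : ι → E) : ‖∑ i, w i • v i‖ ≤ (∑ i, w i) * ∑ i, ‖v i‖ := by
  calc ‖∑ i, w i • v i‖ ≤ ∑ i, w i * ‖v i‖ := by
        simpa [norm_smul, Real.norm_of_nonneg (hw _)] using norm_sum_le univ fun i => w i • v i
    _ ≤ ∑ i, w i * ∑ j, ‖v j‖ := by
        gcongr with i
        · exact hw i
        · exact single_le_sum (fun j _ => norm_nonneg (v j)) (mem_univ i)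
    _ = (∑ i, w i) * ∑ i, ‖v i‖ := by rw [sum_mul]

theorem natCeil_add_natCast_of_mem_Ioc {a : ℝ} (ha : a ∈ Set.Ioc 0 1) (c : ℕ) :
    ⌈a + c⌉₊ = c + 1 := by
  rw [Nat.ceil_eq_iff c.succ_ne_zero]
  push_cast [Nat.add_sub_cancel]
  constructor <;> linarith [ha.1, ha.2]

theorem sub_natCeil_sub_one_mem_Ioc {a : ℝ} (ha : 0 < a) : a - ↑(⌈a⌉₊ - 1) ∈ Set.Ioc 0 1 := by
  have h1 : 1 ≤ ⌈a⌉₊ := Nat.one_le_ceil_iff.2 ha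
  rw [Nat.cast_sub h1, Nat.cast_one]
  constructor <;> linarith [Nat.le_ceil a, Nat.ceil_lt_add_one ha.le]

section LatticePoints

variable {κ : Type*}

def realPoint : (κ → ℤ) →+ (κ → ℝ) := (Int.castAddHom ℝ).compLeft κ

theorem finite_setOf_norm_realPoint_le [Fintype κ] (B : ℝ) :
    {x : κ → ℤ | ‖realPoint x‖ ≤ B}.Finite := by
  -- the norm on `ℤ` is by definition that of the cast to `ℝ`
  have hnorm : ∀ x : κ → ℤ, ‖realPoint x‖ = ‖x‖ := fun _ => rfl
  simpa only [hnorm, ← mem_closedBall_zero_iff, ofPred_mem_eq] using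
    (isCompact_closedBall (0 : κ → ℤ) B).finite_of_discrete

variable (V : ι → κ → ℤ)

def latticePoints (k : ℕ) : Set (κ → ℤ) :=
  realPoint ⁻¹' dilatedOpenSimplex (realPoint ∘ V) k

/-- Lattice points of the half-open parallelepiped `{∑ μᵢ (Vᵢ, 1) | μ ∈ (0, 1]^ι}` in
`ℤ^κ × ℕ`, the last coordinate being the height `∑ μᵢ`. -/
def boxPoints : Set ((κ → ℤ) × ℕ) :=
  {p | ∃ μ : ι → ℝ, (∀ i, μ i ∈ Set.Ioc 0 1) ∧ ∑ i, μ i = p.2 ∧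
    ∑ i, μ i • realPoint (V i) = realPoint p.1}

theorem height_le_card_of_mem_boxPoints {p : (κ → ℤ) × ℕ} (hp : p ∈ boxPoints V) :
    p.2 ≤ Fintype.card ι := by
  obtain ⟨μ, hμ, hsum, -⟩ := hp
  have : (p.2 : ℝ) ≤ Fintype.card ι := by
    simpa [← hsum] using sum_le_sum fun i (_ : i ∈ Finset.univ) => (hμ i).2
  exact_mod_cast this

theorem boxPoints_finite [Fintype κ] : (boxPoints V).Finite := by
  refine ((finite_setOf_norm_realPoint_le (Fintype.card ι * ∑ i, ‖realPoint (V i)‖)).prod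
    (finite_Iic (Fintype.card ι))).subset fun p hp => ⟨?_, height_le_card_of_mem_boxPoints V hp⟩
  obtain ⟨μ, hμ, hsum, hu⟩ := id hp
  show ‖realPoint p.1‖ ≤ _
  rw [← hu]
  refine (norm_sum_smul_le_of_nonneg (fun i => (hμ i).1.le) _).trans
    (mul_le_mul_of_nonneg_right ?_ (by positivity))
  rw [hsum]
  exact_mod_cast height_le_card_of_mem_boxPoints V hp

theorem realPoint_add_sum_nsmul (u : κ → ℤ) (c : ι → ℕ) :
    realPoint (u + ∑ i, c i • V i) = realPoint u + ∑ i, (c i : ℝ) • realPoint (V i) := by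
  simp only [map_add, map_sum, map_nsmul, Nat.cast_smul_eq_nsmul]

theorem sum_add_smul_realPoint {μ : ι → ℝ} {u : κ → ℤ}
    (hu : ∑ i, μ i • realPoint (V i) = realPoint u) (c : ι → ℕ) :
    ∑ i, (μ i + c i) • realPoint (V i) = realPoint (u + ∑ i, c i • V i) := by
  rw [realPoint_add_sum_nsmul, ← hu, ← sum_add_distrib]
  simp only [add_smul]

theorem add_sum_nsmul_mem_latticePoints {p : (κ → ℤ) × ℕ} (hp : p ∈ boxPoints V) (c : ι → ℕ) :
    p.1 + ∑ i, c i • V i ∈ latticePoints V (p.2 + ∑ i, c i) := by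
  obtain ⟨μ, hμ, hsum, hu⟩ := hp
  refine ⟨fun i => μ i + c i, fun i => by positivity [(hμ i).1], ?_,
    sum_add_smul_realPoint V hu c⟩
  push_cast
  rw [sum_add_distrib, hsum]

theorem exists_mem_boxPoints_of_mem_latticePoints {k : ℕ} {x : κ → ℤ}
    (hx : x ∈ latticePoints V k) :
    ∃ p ∈ boxPoints V, ∃ c : ι → ℕ, p.2 + ∑ i, c i = k ∧ p.1 + ∑ i, c i • V i = x := by
  obtain ⟨w, hw, hsum, hx⟩ := hx
  set c : ι → ℕ := fun i => ⌈w i⌉₊ - 1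
  have hμ : ∀ i, w i - c i ∈ Set.Ioc 0 1 := fun i => sub_natCeil_sub_one_mem_Ioc (hw i)
  have hμsum : ∑ i, (w i - c i) = k - ∑ i, (c i : ℝ) := by rw [sum_sub_distrib, hsum]
  have hck : ∑ i, c i ≤ k := by
    have : (0 : ℝ) ≤ k - ∑ i, (c i : ℝ) := hμsum ▸ sum_nonneg fun i _ => (hμ i).1.le
    exact_mod_cast (sub_nonneg.1 this)
  refine ⟨(x - ∑ i, c i • V i, k - ∑ i, c i), ⟨fun i => w i - c i, hμ, ?_, ?_⟩, c,
    Nat.sub_add_cancel hck, sub_add_cancel _ _⟩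
  · rw [hμsum]
    push_cast [hck]
    rfl
  · show ∑ i, (w i - c i) • realPoint (V i) = realPoint (x - ∑ i, c i • V i)
    rw [map_sub, map_sum, ← hx]
    simp only [sub_smul, sum_sub_distrib, map_nsmul, Nat.cast_smul_eq_nsmul, Function.comp_apply]

theorem eq_of_add_sum_nsmul_eq (hV : AffineIndependent ℝ (realPoint ∘ V))
    {p q : (κ → ℤ) × ℕ} (hp : p ∈ boxPoints V) (hq : q ∈ boxPoints V) {c c' : ι → ℕ}
    (hh : p.2 + ∑ i, c i = q.2 + ∑ i, c' i)
    (hx : p.1 + ∑ i, c i • V i = q.1 + ∑ i, c' i • V i) : p = q ∧ c = c' := by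
  obtain ⟨μ, hμ, hμsum, hμu⟩ := hp
  obtain ⟨ν, hν, hνsum, hνu⟩ := hq
  have hw : ∀ i, μ i + c i = ν i + c' i := by
    refine fun i => hV.eq_of_sum_eq_sum (s := Finset.univ) (w₁ := fun i => μ i + c i)
      (w₂ := fun i => ν i + c' i) ?_ ?_ i (mem_univ i)
    · simp only [sum_add_distrib, hμsum, hνsum]
      exact_mod_cast hh
    · simp only [Function.comp_apply, sum_add_smul_realPoint V hμu, sum_add_smul_realPoint V hνu,
        hx]
  have hc : c = c' := funext fun i => by
    simpa using (natCeil_add_natCast_of_mem_Ioc (hμ i) (c i)).symm.trans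
      ((congrArg Nat.ceil (hw i)).trans (natCeil_add_natCast_of_mem_Ioc (hν i) (c' i)))
  subst hc
  have hμν : μ = ν := funext fun i => by linarith [hw i]
  subst hμν
  refine ⟨Prod.ext ?_ ?_, rfl⟩
  · simpa using hx
  · exact_mod_cast hμsum.symm.trans hνsum

theorem latticePoints_eq_image [Fintype κ] [DecidableEq κ] [DecidableEq ι] (k : ℕ) :
    latticePoints V k = ↑((((boxPoints_finite V).toFinset.filter (·.2 ≤ k)).sigma
      fun p => piAntidiag Finset.univ (k - p.2)).image fun q => q.1.1 + ∑ i, q.2 i • V i) := by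
  ext x
  simp only [coe_image, Set.mem_image, mem_coe, mem_sigma, mem_filter, Set.Finite.mem_toFinset,
    mem_piAntidiag, Sigma.exists]
  constructor
  · intro hx
    obtain ⟨p, hp, c, hk, rfl⟩ := exists_mem_boxPoints_of_mem_latticePoints V hx
    exact ⟨p, c, ⟨⟨hp, by omega⟩, by omega, fun i _ => mem_univ i⟩, rfl⟩
  · rintro ⟨p, c, ⟨⟨hp, hpk⟩, hc, -⟩, rfl⟩
    simpa [hc, Nat.add_sub_cancel' hpk] using add_sum_nsmul_mem_latticePoints V hp c

theorem ncard_latticePoints [Fintype κ] [DecidableEq ι] (hV : AffineIndependent ℝ (realPoint ∘ V))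
    (k : ℕ) : (latticePoints V k).ncard = ∑ p ∈ (boxPoints_finite V).toFinset with p.2 ≤ k,
      #(piAntidiag (Finset.univ : Finset ι) (k - p.2)) := by
  classical
  rw [latticePoints_eq_image, Set.ncard_coe_finset, card_image_of_injOn, card_sigma]
  rintro ⟨p, c⟩ hpc ⟨q, c'⟩ hqc hx
  simp only [coe_sigma, Set.mem_sigma_iff, coe_filter, Set.Finite.mem_toFinset, mem_coe,
    mem_piAntidiag, Set.mem_ofPred_eq] at hpc hqc
  obtain ⟨⟨hp, hpk⟩, hc, -⟩ := hpc
  obtain ⟨⟨hq, hqk⟩, hc', -⟩ := hqc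
  obtain ⟨rfl, rfl⟩ := eq_of_add_sum_nsmul_eq V hV hp hq (by dsimp only; rw [hc, hc']; omega) hx
  rfl

theorem latticePoints_finite [Fintype κ] (k : ℕ) : (latticePoints V k).Finite := by
  classical
  rw [latticePoints_eq_image]
  exact finite_toSet _

end LatticePoints

theorem card_piAntidiag_univ [DecidableEq ι] {m : ℕ} (hm : Fintype.card ι = m + 1) (s : ℕ) :
    #(piAntidiag (Finset.univ : Finset ι) s) = (s + m).choose m := by
  rw [← map_sym_eq_piAntidiag, card_map, sym_univ, card_univ, Sym.card_sym_eq_choose, hm,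
    add_right_comm, Nat.add_sub_cancel, add_comm, Nat.choose_symm_add]

theorem ite_choose_eq_sum_choose_mul_choose {m r k : ℕ} (hr : r ≤ m + 1) (hk : 1 ≤ k) :
    (if r ≤ k then (k - r + m).choose m else 0) =
      ∑ i ∈ range (m + 1), (k - 1).choose i * (m + 1 - r).choose (m - i) := by
  split_ifs with h
  · rw [show k - r + m = (k - 1) + (m + 1 - r) by omega, Nat.add_choose_eq,
      Nat.sum_antidiagonal_eq_sum_range_succ_mk]
  · refine (sum_eq_zero fun i hi => ?_).symm
    rcases lt_or_ge (k - 1) i with hlt | hge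
    · rw [Nat.choose_eq_zero_of_lt hlt, zero_mul]
    · have : m + 1 - r < m - i := by rw [Finset.mem_range] at hi; omega
      rw [Nat.choose_eq_zero_of_lt this, mul_zero]

/-- `F k = ∑_{i ≤ d} f*ᵢ C(k - 1, i)` for all `k ≥ 1`, with `f*ᵢ ∈ ℕ`. -/
def HasNatFStar (F : ℕ → ℕ) (d : ℕ) : Prop :=
  ∃ f : ℕ → ℕ, ∀ k, 0 < k → F k = ∑ i ∈ range (d + 1), f i * (k - 1).choose i

theorem HasNatFStar.mono {F : ℕ → ℕ} {d e : ℕ} (h : HasNatFStar F d) (hde : d ≤ e) :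
    HasNatFStar F e := by
  obtain ⟨f, hf⟩ := h
  refine ⟨fun i => if i ≤ d then f i else 0, fun k hk => ?_⟩
  rw [hf k hk]
  refine (sum_congr rfl fun i hi => ?_).trans
    (sum_subset (range_subset_range.2 (by omega)) fun i _ hi => ?_)
  · dsimp only
    rw [if_pos (Nat.lt_succ_iff.1 (Finset.mem_range.1 hi))]
  · dsimp only
    rw [if_neg (by simpa using hi), zero_mul]

theorem HasNatFStar.sum {J : Type*} [Fintype J] {F : J → ℕ → ℕ} {d : ℕ}
    (h : ∀ j, HasNatFStar (F j) d) : HasNatFStar (fun k => ∑ j, F j k) d := by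
  choose f hf using h
  refine ⟨fun i => ∑ j, f j i, fun k hk => ?_⟩
  simp only [hf _ k hk, sum_mul]
  exact sum_comm

theorem hasNatFStar_ncard_latticePoints {κ : Type*} [Fintype κ] {V : ι → κ → ℤ}
    (hV : AffineIndependent ℝ (realPoint ∘ V)) :
    HasNatFStar (fun k => (latticePoints V k).ncard) (Fintype.card ι - 1) := by
  classical
  rcases Nat.eq_zero_or_eq_succ_pred (Fintype.card ι) with h0 | hm
  · have : IsEmpty ι := Fintype.card_eq_zero_iff.1 h0
    refine ⟨0, fun k hk => ?_⟩
    simp [latticePoints, dilatedOpenSimplex, (Nat.cast_pos (α := ℝ)).2 hk |>.ne]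
  set m := (Fintype.card ι).pred
  refine ⟨fun i => ∑ p ∈ (boxPoints_finite V).toFinset, (m + 1 - p.2).choose (m - i),
    fun k hk => ?_⟩
  simp only [ncard_latticePoints V hV, card_piAntidiag_univ hm, sum_filter, sum_mul]
  rw [sum_comm]
  refine sum_congr rfl fun p hp => ?_
  rw [ite_choose_eq_sum_choose_mul_choose
    ((height_le_card_of_mem_boxPoints V ((Set.Finite.mem_toFinset _).1 hp)).trans hm.le) hk]
  exact sum_congr rfl fun i _ => mul_comm _ _

theorem AffineIndependent.preimage_smul_intrinsicInterior_convexHull {κ : Type*} [Fintype κ]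
    {V : ι → κ → ℤ} (hV : AffineIndependent ℝ (realPoint ∘ V)) {k : ℕ} (hk : 0 < k) :
    realPoint ⁻¹' ((k : ℝ) • intrinsicInterior ℝ (convexHull ℝ (range (realPoint ∘ V)))) =
      latticePoints V k := by
  rw [hV.intrinsicInterior_convexHull, smul_dilatedOpenSimplex _ (Nat.cast_pos.2 hk), mul_one]
  rfl

theorem ncard_preimage_iUnion {α β J : Type*} [Fintype J] (f : α → β) {s : J → Set β}
    (hs : Pairwise (Function.onFun Disjoint s)) (hfin : ∀ j, (f ⁻¹' s j).Finite) :
    (f ⁻¹' ⋃ j, s j).ncard = ∑ j, (f ⁻¹' s j).ncard := by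
  rw [preimage_iUnion, ncard_iUnion_of_finite hfin fun i j hij => (hs hij).preimage f,
    finsum_eq_sum_of_fintype]

/-- Nonnegativity of the `f*`-vector: if `X` is a finite disjoint union of relative interiors
of simplices with integer vertices, `d` is the maximal dimension of the simplices, and `p` is
a polynomial with `p(k) = #(ℤ^n ∩ k·X)` for all positive integers `k`, then writing
`p(k) = Σ_{i=0}^{d} f*_i · C(k-1, i)`, every `f*_i` is a nonnegative integer. -/
theorem fstar_nonnegativity
    (n N : ℕ) (Δ : Fin N → Finset (Fin n → ℤ))
    (haff : ∀ j, AffineIndependent ℝ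
      (fun q : {x // x ∈ Δ j} => (fun i => ((q : Fin n → ℤ) i : ℝ))))
    (O : Fin N → Set (Fin n → ℝ))
    (hO : ∀ j, O j =
      intrinsicInterior ℝ (convexHull ℝ ((fun y : Fin n → ℤ => fun i => (y i : ℝ)) '' ↑(Δ j))))
    (hdisj : Pairwise (Function.onFun Disjoint O))
    (X : Set (Fin n → ℝ)) (hX : X = ⋃ j, O j)
    (d : ℕ) (hd : d = Finset.univ.sup (fun j => (Δ j).card - 1))
    (p : Polynomial ℚ)
    (hp : ∀ k : ℕ, 0 < k →
      p.eval (k : ℚ) =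
        (Set.ncard {x : Fin n → ℤ | (fun i => (x i : ℝ)) ∈ (k : ℝ) • X} : ℚ)) :
    ∃ f : Fin (d + 1) → ℕ,
      ∀ k : ℕ, 0 < k →
        p.eval (k : ℚ) = ∑ i : Fin (d + 1), (f i : ℚ) * Nat.choose (k - 1) (i : ℕ) := by
  let V : ∀ j, Δ j → Fin n → ℤ := fun j q => q
  have hV : ∀ j, AffineIndependent ℝ (realPoint ∘ V j) := haff
  have hOV : ∀ j, O j = intrinsicInterior ℝ (convexHull ℝ (range (realPoint ∘ V j))) := fun j => by
    rw [hO j, range_comp, Subtype.range_coe_subtype]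
    rfl
  have hcount : ∀ k : ℕ, 0 < k → {x : Fin n → ℤ | (fun i => (x i : ℝ)) ∈ (k : ℝ) • X}.ncard =
      ∑ j, (latticePoints (V j) k).ncard := by
    intro k hk
    have hdil : ∀ j, realPoint ⁻¹' ((k : ℝ) • O j) = latticePoints (V j) k := fun j => by
      rw [hOV j, (hV j).preimage_smul_intrinsicInterior_convexHull hk]
    simp only [← hdil, hX, smul_set_iUnion]
    refine ncard_preimage_iUnion realPoint (fun i j hij => ?_) fun j =>
      hdil j ▸ latticePoints_finite _ k
    exact (disjoint_image_iff (smul_right_injective _ (by positivity))).2 (hdisj hij)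
  have hcard : ∀ j, Fintype.card (Δ j) - 1 ≤ d := fun j => by
    rw [Fintype.card_coe, hd]
    exact Finset.le_sup (f := fun j => (Δ j).card - 1) (Finset.mem_univ j)
  obtain ⟨f, hf⟩ : HasNatFStar (fun k => ∑ j, (latticePoints (V j) k).ncard) d :=
    HasNatFStar.sum fun j => (hasNatFStar_ncard_latticePoints (hV j)).mono (hcard j)
  beta_reduce at hf
  refine ⟨fun i => f i, fun k hk => ?_⟩
  rw [hp k hk, hcount k hk, hf k hk, ← Fin.sum_univ_eq_sum_range]
  push_cast
  rfl
end
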